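/- arXiv:2411.03058 — 5 statements merged into one kernel-verified Lean document; each statement's English description precedes it below -/
import Mathlib

section
/- Let I be an ideal of R such that R/I is not Artinian (equivalently, the Krull dimension of R/I is at least 1). Then the inverse system I^⊥ is not a finitely generated R-module. -/
/- Context: R = k[[x_1,…,x_n]] acting on Γ = k[y_1,…,y_n] by contraction:
`x^α ∘ y^β = y^{β-α}` if `α ≤ β` componentwise and `0` otherwise, extended
`k`-linearly. -/

open MvPolynomial

noncomputable def contract {n : ℕ} {k : Type} [Field k]
    (f : MvPowerSeries (Fin n) k) (F : MvPolynomial (Fin n) k) :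
    MvPolynomial (Fin n) k :=
  ∑ γ ∈ F.support, ∑ p ∈ Finset.HasAntidiagonal.antidiagonal γ,
    (MvPowerSeries.coeff p.1 f * MvPolynomial.coeff γ F) •
      MvPolynomial.monomial p.2 (1 : k)

variable {n : ℕ} {k : Type} [Field k]

theorem contract_zero (f : MvPowerSeries (Fin n) k) :
    contract f (0 : MvPolynomial (Fin n) k) = 0 := by
  simp [contract]

theorem zero_contract (F : MvPolynomial (Fin n) k) :
    contract (0 : MvPowerSeries (Fin n) k) F = 0 := by
  simp [contract]

theorem add_contract (f g : MvPowerSeries (Fin n) k) (F : MvPolynomial (Fin n) k) :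
    contract (f + g) F = contract f F + contract g F := by
  simp [contract, add_mul, add_smul, Finset.sum_add_distrib]

theorem one_contract (F : MvPolynomial (Fin n) k) : contract 1 F = F := by
  unfold contract
  conv_rhs => rw [← F.support_sum_monomial_coeff]
  refine Finset.sum_congr rfl fun γ hγ => ?_
  rw [Finset.sum_eq_single ((0 : Fin n →₀ ℕ), γ)]
  · simp [MvPowerSeries.coeff_one, MvPolynomial.smul_monomial]
  · rintro ⟨p1, p2⟩ hp hne
    rw [Finset.HasAntidiagonal.mem_antidiagonal] at hp
    have : p1 ≠ 0 := by
      rintro rfl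
      simp at hp
      exact hne (by simp [hp])
    simp [MvPowerSeries.coeff_one, this]
  · intro h
    exact absurd (Finset.HasAntidiagonal.mem_antidiagonal.mpr (by simp)) h

theorem contract_eq_sum_subset (f : MvPowerSeries (Fin n) k)
    (F : MvPolynomial (Fin n) k) {S : Finset (Fin n →₀ ℕ)} (hS : F.support ⊆ S) :
    contract f F = ∑ γ ∈ S, ∑ p ∈ Finset.HasAntidiagonal.antidiagonal γ,
      (MvPowerSeries.coeff p.1 f * MvPolynomial.coeff γ F) •
        MvPolynomial.monomial p.2 (1 : k) := by
  rw [contract]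
  refine Finset.sum_subset hS fun γ _ hγ => ?_
  have h0 : MvPolynomial.coeff γ F = 0 := MvPolynomial.notMem_support_iff.mp hγ
  simp [h0]

theorem contract_add (f : MvPowerSeries (Fin n) k) (F G : MvPolynomial (Fin n) k) :
    contract f (F + G) = contract f F + contract f G := by
  rw [contract_eq_sum_subset f (F + G) (S := F.support ∪ G.support)
      ((MvPolynomial.support_add (p := F) (q := G)).trans le_rfl),
    contract_eq_sum_subset f F (S := F.support ∪ G.support) Finset.subset_union_left,
    contract_eq_sum_subset f G (S := F.support ∪ G.support) Finset.subset_union_right,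
    ← Finset.sum_add_distrib]
  refine Finset.sum_congr rfl fun γ _ => ?_
  rw [← Finset.sum_add_distrib]
  refine Finset.sum_congr rfl fun p _ => ?_
  rw [MvPolynomial.coeff_add, mul_add, add_smul]

theorem coeff_contract (f : MvPowerSeries (Fin n) k) (F : MvPolynomial (Fin n) k)
    {S : Finset (Fin n →₀ ℕ)} (hS : F.support ⊆ S) (β : Fin n →₀ ℕ) :
    MvPolynomial.coeff β (contract f F) =
      ∑ γ ∈ S, if β ≤ γ then
        MvPowerSeries.coeff (γ - β) f * MvPolynomial.coeff γ F else 0 := by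
  rw [contract_eq_sum_subset f F hS, MvPolynomial.coeff_sum]
  refine Finset.sum_congr rfl fun γ _ => ?_
  rw [MvPolynomial.coeff_sum]
  by_cases hβγ : β ≤ γ
  · rw [Finset.sum_eq_single (γ - β, β)]
    · simp [MvPolynomial.coeff_smul, MvPolynomial.coeff_monomial, hβγ]
    · rintro ⟨p1, p2⟩ hp hne
      rw [Finset.HasAntidiagonal.mem_antidiagonal] at hp
      rw [MvPolynomial.coeff_smul, MvPolynomial.coeff_monomial]
      by_cases h2 : p2 = β
      · subst h2
        have h1 : p1 = γ - p2 := eq_tsub_of_add_eq hp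
        exact absurd (by rw [h1]) hne
      · simp [h2]
    · intro h
      exact absurd (Finset.HasAntidiagonal.mem_antidiagonal.mpr (tsub_add_cancel_of_le hβγ)) h
  · rw [if_neg hβγ]
    refine Finset.sum_eq_zero fun p hp => ?_
    rw [Finset.HasAntidiagonal.mem_antidiagonal] at hp
    rw [MvPolynomial.coeff_smul, MvPolynomial.coeff_monomial, if_neg, smul_zero]
    rintro rfl
    exact hβγ (hp ▸ le_add_self)

theorem support_contract_subset (g : MvPowerSeries (Fin n) k)
    (F : MvPolynomial (Fin n) k) :
    (contract g F).support ⊆ F.support.biUnion Finset.Iic := by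
  intro δ hδ
  rw [MvPolynomial.mem_support_iff,
    coeff_contract g F (le_refl F.support) δ] at hδ
  obtain ⟨γ, hγ, hne⟩ := Finset.exists_ne_zero_of_sum_ne_zero hδ
  refine Finset.mem_biUnion.mpr ⟨γ, hγ, Finset.mem_Iic.mpr ?_⟩
  by_contra h
  rw [if_neg h] at hne
  exact hne rfl

theorem mul_contract (f g : MvPowerSeries (Fin n) k) (F : MvPolynomial (Fin n) k) :
    contract (f * g) F = contract f (contract g F) := by
  classical
  set S : Finset (Fin n →₀ ℕ) := F.support.biUnion Finset.Iic with hSdef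
  have hFS : F.support ⊆ S := fun γ hγ =>
    Finset.mem_biUnion.mpr ⟨γ, hγ, Finset.mem_Iic.mpr le_rfl⟩
  apply MvPolynomial.ext
  intro β
  rw [coeff_contract (f * g) F hFS β,
    coeff_contract f (contract g F) (support_contract_subset g F) β]
  have key : ∀ δ ∈ S,
      (if β ≤ δ then MvPowerSeries.coeff (δ - β) f *
          MvPolynomial.coeff δ (contract g F) else 0) =
        ∑ γ ∈ F.support, (if β ≤ δ ∧ δ ≤ γ then
          MvPowerSeries.coeff (δ - β) f * MvPowerSeries.coeff (γ - δ) g *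
            MvPolynomial.coeff γ F else 0) := by
    intro δ _
    by_cases hβδ : β ≤ δ
    · rw [if_pos hβδ, coeff_contract g F (le_refl F.support) δ, Finset.mul_sum]
      refine Finset.sum_congr rfl fun γ _ => ?_
      by_cases hδγ : δ ≤ γ
      · rw [if_pos hδγ, if_pos ⟨hβδ, hδγ⟩, mul_assoc]
      · rw [if_neg hδγ, if_neg (fun h => hδγ h.2), mul_zero]
    · rw [if_neg hβδ]
      exact (Finset.sum_eq_zero fun γ _ => by
        rw [if_neg (fun h => hβδ h.1)]).symm
  rw [Finset.sum_congr rfl key, Finset.sum_comm,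
    ← Finset.sum_subset hFS (fun γ _ hγ => by
      rw [MvPolynomial.notMem_support_iff.mp hγ, mul_zero, ite_self])]
  refine Finset.sum_congr rfl fun γ hγ => ?_
  by_cases hβγ : β ≤ γ
  · rw [if_pos hβγ, MvPowerSeries.coeff_mul, Finset.sum_mul, ← Finset.sum_filter]
    refine Finset.sum_nbij' (fun p => β + p.1) (fun δ => (δ - β, γ - δ))
      ?_ ?_ ?_ ?_ ?_
    · rintro ⟨p1, p2⟩ hp
      rw [Finset.HasAntidiagonal.mem_antidiagonal] at hp
      have h1 : p1 ≤ γ - β := hp ▸ le_self_add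
      have h2 : β + p1 ≤ γ := by
        calc β + p1 ≤ β + (γ - β) := add_le_add_right h1 β
        _ = γ := add_tsub_cancel_of_le hβγ
      exact Finset.mem_filter.mpr
        ⟨Finset.mem_biUnion.mpr ⟨γ, hγ, Finset.mem_Iic.mpr h2⟩, le_self_add, h2⟩
    · intro δ hδ
      obtain ⟨-, hβδ, hδγ⟩ := Finset.mem_filter.mp hδ
      rw [Finset.HasAntidiagonal.mem_antidiagonal, add_comm]
      exact tsub_add_tsub_cancel hδγ hβδ
    · rintro ⟨p1, p2⟩ hp
      rw [Finset.HasAntidiagonal.mem_antidiagonal] at hp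
      have h3 : (β + p1) + p2 = γ := by
        rw [add_assoc, hp]
        exact add_tsub_cancel_of_le hβγ
      refine Prod.ext ?_ ?_
      · exact add_tsub_cancel_left β p1
      · exact (eq_tsub_of_add_eq (by rw [add_comm]; exact h3)).symm
    · intro δ hδ
      obtain ⟨-, hβδ, -⟩ := Finset.mem_filter.mp hδ
      exact add_tsub_cancel_of_le hβδ
    · rintro ⟨p1, p2⟩ hp
      rw [Finset.HasAntidiagonal.mem_antidiagonal] at hp
      have h3 : (β + p1) + p2 = γ := by
        rw [add_assoc, hp]
        exact add_tsub_cancel_of_le hβγ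
      rw [add_tsub_cancel_left β p1,
        ← (eq_tsub_of_add_eq (by rw [add_comm]; exact h3) : p2 = γ - (β + p1))]
  · rw [if_neg hβγ]
    exact (Finset.sum_eq_zero fun δ hδ => by
      rw [if_neg (fun h => hβγ (h.1.trans h.2))]).symm

/-- `Γ = k[y_1,…,y_n]` is a module over `R = k[[x_1,…,x_n]]` via contraction. -/
noncomputable instance contractModule :
    Module (MvPowerSeries (Fin n) k) (MvPolynomial (Fin n) k) where
  smul := contract
  one_smul := one_contract
  mul_smul := mul_contract
  smul_zero := contract_zero
  smul_add := contract_add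
  add_smul := add_contract
  zero_smul := zero_contract

theorem smul_def (f : MvPowerSeries (Fin n) k) (F : MvPolynomial (Fin n) k) :
    f • F = contract f F := rfl

/-- Macaulay's inverse system `I^⊥ = {F ∈ Γ : g ∘ F = 0 for all g ∈ I}`, an
`R`-submodule of `Γ`. -/
noncomputable def perp (I : Ideal (MvPowerSeries (Fin n) k)) :
    Submodule (MvPowerSeries (Fin n) k) (MvPolynomial (Fin n) k) where
  carrier := {F | ∀ g ∈ I, contract g F = 0}
  add_mem' := fun {F G} hF hG g hg => by
    rw [contract_add, hF g hg, hG g hg, add_zero]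
  zero_mem' := fun g _ => contract_zero g
  smul_mem' := fun c F hF g hg => by
    show contract g (contract c F) = 0
    rw [← mul_contract, mul_comm, mul_contract, hF g hg, contract_zero]

theorem mem_perp_iff {I : Ideal (MvPowerSeries (Fin n) k)}
    {F : MvPolynomial (Fin n) k} : F ∈ perp I ↔ ∀ g ∈ I, contract g F = 0 :=
  Iff.rfl

section MacaulayAux

variable {n : ℕ} {k : Type} [Field k]

/-- Total degree of a multi-exponent. -/
def dg (γ : Fin n →₀ ℕ) : ℕ := γ.sum fun _ e => e

theorem dg_zero : dg (0 : Fin n →₀ ℕ) = 0 := by simp [dg]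

theorem dg_single (i : Fin n) (b : ℕ) : dg (Finsupp.single i b) = b := by
  simp [dg]

theorem dg_add (a b : Fin n →₀ ℕ) : dg (a + b) = dg a + dg b :=
  Finsupp.sum_add_index' (fun _ => rfl) (fun _ _ _ => rfl)

theorem dg_mono {a b : Fin n →₀ ℕ} (h : a ≤ b) : dg a ≤ dg b := by
  have h2 := dg_add a (b - a)
  rw [add_tsub_cancel_of_le h] at h2
  omega

theorem apply_le_dg (a : Fin n →₀ ℕ) (i : Fin n) : a i ≤ dg a := by
  by_cases hi : i ∈ a.support
  · exact Finset.single_le_sum (fun j _ => Nat.zero_le _) hi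
  · simp [Finsupp.notMem_support_iff.mp hi]

theorem one_le_dg {a : Fin n →₀ ℕ} (h : a ≠ 0) : 1 ≤ dg a := by
  obtain ⟨i, hi⟩ := Finsupp.ne_iff.mp (by simpa using h)
  have : 1 ≤ a i := Nat.one_le_iff_ne_zero.mpr (by simpa using hi)
  exact this.trans (apply_le_dg a i)

/-- The ideal of `k[[x_1,…,x_n]]` generated by the variables. -/
noncomputable def Mv1 (n : ℕ) (k : Type) [Field k] : Ideal (MvPowerSeries (Fin n) k) :=
  Ideal.span (Set.range MvPowerSeries.X)

theorem X_mem_Mv1 (i : Fin n) : (MvPowerSeries.X i : MvPowerSeries (Fin n) k) ∈ Mv1 n k :=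
  Ideal.subset_span ⟨i, rfl⟩

theorem constantCoeff_eq_zero_of_mem_Mv1 {f : MvPowerSeries (Fin n) k}
    (hf : f ∈ Mv1 n k) : MvPowerSeries.constantCoeff f = 0 := by
  have : Mv1 n k ≤ RingHom.ker (MvPowerSeries.constantCoeff) := by
    rw [Mv1, Ideal.span_le]
    rintro _ ⟨i, rfl⟩
    simp [RingHom.mem_ker]
  exact this hf

theorem Mv1_ne_top : Mv1 n k ≠ ⊤ := by
  intro htop
  have h1 : (1 : MvPowerSeries (Fin n) k) ∈ Mv1 n k := htop ▸ Submodule.mem_top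
  have := constantCoeff_eq_zero_of_mem_Mv1 h1
  simp at this

theorem coeff_eq_zero_of_mem_Mv1_pow {N : ℕ} {f : MvPowerSeries (Fin n) k}
    (hf : f ∈ Mv1 n k ^ N) {γ : Fin n →₀ ℕ} (hγ : dg γ < N) :
    MvPowerSeries.coeff γ f = 0 := by
  classical
  induction N generalizing f γ with
  | zero => omega
  | succ N ih =>
    rw [pow_succ] at hf
    have key : ∀ γ : Fin n →₀ ℕ, dg γ < N + 1 → MvPowerSeries.coeff γ f = 0 := by
      refine Submodule.mul_induction_on hf (fun a ha b hb γ hγ => ?_)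
        (fun x y hx hy γ hγ => ?_)
      · rw [MvPowerSeries.coeff_mul]
        refine Finset.sum_eq_zero fun p hp => ?_
        rw [Finset.HasAntidiagonal.mem_antidiagonal] at hp
        by_cases h1 : dg p.1 < N
        · rw [ih ha h1, zero_mul]
        · have hdg : dg p.1 + dg p.2 = dg γ := by rw [← dg_add, hp]
          have hp2 : p.2 = 0 := by
            by_contra h2
            have := one_le_dg h2
            omega
          rw [hp2, MvPowerSeries.coeff_zero_eq_constantCoeff,
            constantCoeff_eq_zero_of_mem_Mv1 hb, mul_zero]
      · rw [map_add, hx γ hγ, hy γ hγ, add_zero]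
    exact key γ hγ

theorem exists_le_dg (N : ℕ) (γ : Fin n →₀ ℕ) (h : N ≤ dg γ) :
    ∃ α, α ≤ γ ∧ dg α = N := by
  induction N with
  | zero => exact ⟨0, zero_le, dg_zero⟩
  | succ N ih =>
    obtain ⟨α, hαγ, hα⟩ := ih (by omega)
    have hne : α ≠ γ := by
      intro hh
      rw [hh] at hα
      omega
    obtain ⟨i, hi⟩ := Finsupp.ne_iff.mp hne
    have hlt : α i < γ i := lt_of_le_of_ne (Finsupp.le_def.mp hαγ i) hi
    refine ⟨α + Finsupp.single i 1, ?_, by rw [dg_add, hα, dg_single]⟩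
    rw [Finsupp.le_def]
    intro j
    by_cases hj : j = i
    · subst hj
      simp only [Finsupp.add_apply, Finsupp.single_eq_same]
      omega
    · simp only [Finsupp.add_apply, Finsupp.single_eq_of_ne' (Ne.symm (by simpa using hj))]
      simpa using Finsupp.le_def.mp hαγ j

theorem monomial_one_mem_Mv1_pow (α : Fin n →₀ ℕ) :
    (MvPowerSeries.monomial α 1 : MvPowerSeries (Fin n) k) ∈ Mv1 n k ^ (dg α) := by
  induction α using Finsupp.induction with
  | zero => rw [dg_zero, pow_zero, MvPowerSeries.monomial_zero_one, Ideal.one_eq_top]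
            exact Submodule.mem_top
  | single_add i b f hif hb ihf =>
    have hsplit : (MvPowerSeries.monomial (Finsupp.single i b + f) 1 :
        MvPowerSeries (Fin n) k) = MvPowerSeries.X i ^ b * MvPowerSeries.monomial f 1 := by
      rw [MvPowerSeries.X_pow_eq, MvPowerSeries.monomial_mul_monomial, one_mul]
    rw [hsplit, dg_add, dg_single, pow_add]
    exact Ideal.mul_mem_mul (Ideal.pow_mem_pow (X_mem_Mv1 i) b) ihf

theorem mem_Mv1_pow_of_coeff_eq_zero {N : ℕ} {f : MvPowerSeries (Fin n) k}
    (hf : ∀ γ : Fin n →₀ ℕ, dg γ < N → MvPowerSeries.coeff γ f = 0) :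
    f ∈ Mv1 n k ^ N := by
  classical
  set C : Fin n →₀ ℕ := Finsupp.equivFunOnFinite.symm fun _ => N with hC
  set A : Finset (Fin n →₀ ℕ) := (Finset.Iic C).filter fun α => dg α = N with hA
  have hmemA : ∀ α, α ∈ A ↔ dg α = N := by
    intro α
    simp only [hA, Finset.mem_filter, Finset.mem_Iic, and_iff_right_iff_imp]
    intro h
    refine Finsupp.le_def.mpr fun i => ?_
    show α i ≤ N
    exact le_trans (apply_le_dg α i) (le_of_eq h)
  have hch : ∀ γ : Fin n →₀ ℕ, N ≤ dg γ → ∃ α, α ≤ γ ∧ dg α = N := fun γ =>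
    exists_le_dg N γ
  set fα : (Fin n →₀ ℕ) → (Fin n →₀ ℕ) := fun γ =>
    if hγ : N ≤ dg γ then (hch γ hγ).choose else 0 with hfα
  have hfα1 : ∀ γ, N ≤ dg γ → fα γ ≤ γ := by
    intro γ hγ
    simp only [hfα, dif_pos hγ]
    exact (hch γ hγ).choose_spec.1
  have hfα2 : ∀ γ, N ≤ dg γ → dg (fα γ) = N := by
    intro γ hγ
    simp only [hfα, dif_pos hγ]
    exact (hch γ hγ).choose_spec.2
  set ψ : (Fin n →₀ ℕ) → MvPowerSeries (Fin n) k := fun α δ =>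
    if fα (α + δ) = α then MvPowerSeries.coeff (α + δ) f else 0 with hψ
  have hψc : ∀ α δ, MvPowerSeries.coeff δ (ψ α) =
      if fα (α + δ) = α then MvPowerSeries.coeff (α + δ) f else 0 := fun _ _ => rfl
  have hrep : f = ∑ α ∈ A, MvPowerSeries.monomial α 1 * ψ α := by
    ext γ
    rw [map_sum]
    by_cases hγ : N ≤ dg γ
    · rw [Finset.sum_eq_single (fα γ)]
      · rw [MvPowerSeries.coeff_monomial_mul, if_pos (hfα1 γ hγ), hψc,
          add_tsub_cancel_of_le (hfα1 γ hγ), if_pos rfl, one_mul]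
      · intro α hαA hne
        rw [MvPowerSeries.coeff_monomial_mul]
        by_cases hle : α ≤ γ
        · rw [if_pos hle, hψc, add_tsub_cancel_of_le hle, if_neg (fun hh => hne hh.symm),
            mul_zero]
        · rw [if_neg hle]
      · intro hnm
        exact absurd ((hmemA _).mpr (hfα2 γ hγ)) hnm
    · push_neg at hγ
      rw [hf γ hγ]
      symm
      refine Finset.sum_eq_zero fun α hα => ?_
      rw [MvPowerSeries.coeff_monomial_mul, if_neg]
      intro hle
      have h1 := dg_mono hle
      rw [(hmemA α).mp hα] at h1
      omega
  rw [hrep]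
  refine Submodule.sum_mem _ fun α hα => ?_
  have hm := monomial_one_mem_Mv1_pow (k := k) α
  rw [(hmemA α).mp hα] at hm
  exact Ideal.mul_mem_right _ _ hm

/-- The finite set of multi-exponents of total degree `< N`. -/
noncomputable def lowSet (n N : ℕ) : Finset (Fin n →₀ ℕ) :=
  (Finset.Iic ((Finsupp.equivFunOnFinite.symm fun _ => N : Fin n →₀ ℕ))).filter
    fun γ => dg γ < N

theorem mem_lowSet {N : ℕ} {γ : Fin n →₀ ℕ} : γ ∈ lowSet n N ↔ dg γ < N := by
  simp only [lowSet, Finset.mem_filter, Finset.mem_Iic, and_iff_right_iff_imp]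
  intro h
  refine Finsupp.le_def.mpr fun i => ?_
  show γ i ≤ N
  exact le_trans (apply_le_dg γ i) (by omega)

theorem coeff_sum_monomial (A : Finset (Fin n →₀ ℕ)) (c : (Fin n →₀ ℕ) → k)
    (γ : Fin n →₀ ℕ) :
    MvPolynomial.coeff γ (∑ γ' ∈ A, MvPolynomial.monomial γ' (c γ')) =
      if γ ∈ A then c γ else 0 := by
  classical
  rw [MvPolynomial.coeff_sum]
  rw [Finset.sum_congr rfl (fun γ' _ => MvPolynomial.coeff_monomial γ γ' (c γ'))]
  exact Finset.sum_ite_eq' A γ c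

/-- Truncation below total degree `N`, as a `k`-linear map. -/
noncomputable def trN (N : ℕ) :
    MvPowerSeries (Fin n) k →ₗ[k] MvPolynomial (Fin n) k where
  toFun h := ∑ γ ∈ lowSet n N, MvPolynomial.monomial γ (MvPowerSeries.coeff γ h)
  map_add' x y := by
    simp [map_add, Finset.sum_add_distrib]
  map_smul' c x := by
    simp only [LinearMap.map_smul, RingHom.id_apply, Finset.smul_sum,
      MvPolynomial.smul_monomial, smul_eq_mul]

theorem coeff_trN (N : ℕ) (h : MvPowerSeries (Fin n) k) (γ : Fin n →₀ ℕ) :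
    MvPolynomial.coeff γ (trN N h) =
      if dg γ < N then MvPowerSeries.coeff γ h else 0 := by
  classical
  rw [trN]
  simp only [LinearMap.coe_mk, AddHom.coe_mk]
  rw [coeff_sum_monomial]
  by_cases hγ : dg γ < N
  · rw [if_pos (mem_lowSet.mpr hγ), if_pos hγ]
  · rw [if_neg (fun hh => hγ (mem_lowSet.mp hh)), if_neg hγ]

end MacaulayAux

section MacaulayAux2
variable {n : ℕ} {k : Type} [Field k]

/-- The power series supported on a finite set of exponents with given coefficients. -/
noncomputable def sumMon (A : Finset (Fin n →₀ ℕ)) :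
    ({x // x ∈ A} → k) →ₗ[k] MvPowerSeries (Fin n) k where
  toFun c := ∑ γ ∈ A.attach, MvPowerSeries.monomial γ.1 (c γ)
  map_add' x y := by simp [map_add, Finset.sum_add_distrib]
  map_smul' c x := by
    simp only [Pi.smul_apply, smul_eq_mul, RingHom.id_apply, Finset.smul_sum]
    refine Finset.sum_congr rfl fun γ _ => ?_
    rw [← smul_eq_mul, map_smul]

theorem coeff_sumMon (A : Finset (Fin n →₀ ℕ)) (c : (Fin n →₀ ℕ) → k) (γ : Fin n →₀ ℕ) :
    MvPowerSeries.coeff γ (sumMon A fun x => c x.1) = if γ ∈ A then c γ else 0 := by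
  classical
  rw [sumMon]
  simp only [LinearMap.coe_mk, AddHom.coe_mk]
  rw [map_sum, Finset.sum_attach A
    (fun γ' => MvPowerSeries.coeff γ (MvPowerSeries.monomial γ' (c γ')))]
  rw [Finset.sum_congr rfl (fun γ' _ => MvPowerSeries.coeff_monomial γ γ' (c γ'))]
  exact Finset.sum_ite_eq A γ c

end MacaulayAux2
set_option maxHeartbeats 4000000 in
set_option synthInstance.maxHeartbeats 400000 in
/-- if `R/I` is not Artinian then `I^⊥` is not a finitely
generated `R`-module. -/
theorem perp_not_fg_of_not_isArtinianRing {n : ℕ} {k : Type} [Field k] (hn : 1 ≤ n)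
    (I : Ideal (MvPowerSeries (Fin n) k))
    (h : ¬ IsArtinianRing (MvPowerSeries (Fin n) k ⧸ I)) :
    ¬ (perp I).FG := by
  classical
  rintro ⟨S, hS⟩
  set d := S.sup MvPolynomial.totalDegree with hd
  -- Step A : every element of `perp I` has total degree at most `d`
  have hbound : ∀ F ∈ perp I, MvPolynomial.totalDegree F ≤ d := by
    intro F hF
    rw [← hS] at hF
    induction hF using Submodule.span_induction with
    | mem x hx => exact Finset.le_sup (by simpa using hx)
    | zero => simp
    | add x y _ _ ihx ihy =>
      exact le_trans (MvPolynomial.totalDegree_add x y) (max_le ihx ihy)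
    | smul r x _ ihx =>
      rw [smul_def]
      refine le_trans ?_ ihx
      unfold MvPolynomial.totalDegree
      refine Finset.sup_le fun δ hδ => ?_
      obtain ⟨γ, hγ, hδγ⟩ := Finset.mem_biUnion.mp (support_contract_subset r x hδ)
      exact le_trans (dg_mono (Finset.mem_Iic.mp hδγ)) (MvPolynomial.le_totalDegree hγ)
  have hInetop : I ≠ ⊤ := by
    rintro rfl
    have hsub : Subsingleton (MvPowerSeries (Fin n) k ⧸ (⊤ : Ideal (MvPowerSeries (Fin n) k))) :=
      Ideal.Quotient.subsingleton_iff.mpr rfl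
    have hfin : Finite (MvPowerSeries (Fin n) k ⧸ (⊤ : Ideal (MvPowerSeries (Fin n) k))) :=
      Finite.of_subsingleton
    exact h (isArtinianRing_iff.mpr isArtinian_of_finite)
  haveI : Nontrivial (MvPowerSeries (Fin n) k ⧸ I) := Ideal.Quotient.nontrivial_iff.mpr hInetop
  haveI : IsLocalRing (MvPowerSeries (Fin n) k ⧸ I) :=
    IsLocalRing.of_surjective' (Ideal.Quotient.mk I) Ideal.Quotient.mk_surjective
  by_cases hcase : Mv1 n k ^ (d + 1) ≤ I ⊔ Mv1 n k ^ (d + 2)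
  · -- Nakayama forces `Mv1 ^ (d+1) ≤ I`, so `R/I` is finite-dimensional, hence artinian.
    apply h
    set m1 : Ideal (MvPowerSeries (Fin n) k ⧸ I) :=
      Ideal.map (Ideal.Quotient.mk I) (Mv1 n k) with hm1
    have hfg : (m1 ^ (d + 1)).FG := by
      have : m1.FG := by
        rw [hm1, Mv1, Ideal.map_span]
        exact Submodule.fg_span ((Set.finite_range _).image _)
      exact Submodule.FG.pow this (d + 1)
    have hle : m1 ^ (d + 1) ≤ m1 • (m1 ^ (d + 1)) := by
      have h2 : Ideal.map (Ideal.Quotient.mk I) (Mv1 n k ^ (d + 1)) ≤ Ideal.map (Ideal.Quotient.mk I) (I ⊔ Mv1 n k ^ (d + 2)) :=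
        Ideal.map_mono hcase
      have h3 : Ideal.map (Ideal.Quotient.mk I) I = ⊥ := by
        rw [← le_bot_iff, Ideal.map_le_iff_le_comap]
        intro x hx
        rw [Ideal.mem_comap, Ideal.mem_bot]
        exact Ideal.Quotient.eq_zero_iff_mem.mpr hx
      rw [Ideal.map_sup, Ideal.map_pow, Ideal.map_pow, h3, bot_sup_eq] at h2
      refine le_trans h2 ?_
      rw [Ideal.smul_eq_mul, hm1]
      exact (pow_succ' (Ideal.map (Ideal.Quotient.mk I) (Mv1 n k)) (d + 1)).le
    have hm1top : m1 ≠ ⊤ := by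
      intro htop
      have hcom : Ideal.comap (Ideal.Quotient.mk I) m1 = ⊤ := by rw [htop, Ideal.comap_top]
      rw [hm1, Ideal.comap_map_of_surjective (Ideal.Quotient.mk I) Ideal.Quotient.mk_surjective,
        ← RingHom.ker_eq_comap_bot, Ideal.mk_ker] at hcom
      have hsup : Mv1 n k ⊔ I ≤ IsLocalRing.maximalIdeal (MvPowerSeries (Fin n) k) :=
        sup_le (IsLocalRing.le_maximalIdeal Mv1_ne_top) (IsLocalRing.le_maximalIdeal hInetop)
      rw [hcom] at hsup
      exact (IsLocalRing.maximalIdeal.isMaximal _).ne_top (top_le_iff.mp hsup)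
    have hjac : m1 ≤ Ideal.jacobson ⊥ := by
      rw [IsLocalRing.jacobson_eq_maximalIdeal ⊥ bot_ne_top]
      exact IsLocalRing.le_maximalIdeal hm1top
    have hzero : m1 ^ (d + 1) = ⊥ :=
      Submodule.eq_bot_of_le_smul_of_le_jacobson_bot m1 _ hfg hle hjac
    have hMI : Mv1 n k ^ (d + 1) ≤ I := by
      intro x hx
      have hmem : Ideal.Quotient.mk I x ∈ Ideal.map (Ideal.Quotient.mk I) (Mv1 n k ^ (d + 1)) :=
        Ideal.mem_map_of_mem _ hx
      rw [Ideal.map_pow, ← hm1, hzero] at hmem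
      exact Ideal.Quotient.eq_zero_iff_mem.mp (by simpa using hmem)
    have hart : IsArtinian k (MvPowerSeries (Fin n) k ⧸ I) := by
      set L : ({x // x ∈ lowSet n (d + 1)} → k) →ₗ[k] MvPowerSeries (Fin n) k ⧸ I :=
        (Ideal.Quotient.mkₐ k I).toLinearMap ∘ₗ sumMon (lowSet n (d + 1)) with hL
      have hsurj : Function.Surjective L := by
        intro x
        obtain ⟨f, hfx⟩ := Ideal.Quotient.mk_surjective x
        refine ⟨fun γ => MvPowerSeries.coeff γ.1 f, ?_⟩
        rw [hL, LinearMap.comp_apply, AlgHom.toLinearMap_apply, Ideal.Quotient.mkₐ_eq_mk, ← hfx,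
          Ideal.Quotient.eq]
        apply hMI
        apply mem_Mv1_pow_of_coeff_eq_zero
        intro γ hγ
        rw [map_sub, coeff_sumMon (lowSet n (d + 1)) (fun γ' => MvPowerSeries.coeff γ' f) γ,
          if_pos (mem_lowSet.mpr hγ), sub_self]
      exact isArtinian_of_surjective _ L hsurj
    exact isArtinian_of_tower k hart
  · -- otherwise, use duality to produce an element of `perp I` of large degree
    obtain ⟨g, hg1, hg2⟩ := SetLike.not_le_iff_exists.mp hcase
    set N := d + 2 with hN
    set J : Submodule k (MvPolynomial (Fin n) k) :=
      Submodule.map (trN N) (Submodule.restrictScalars k I) with hJ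
    have htg : trN N g ∉ J := by
      rintro ⟨a, haI, hta⟩
      apply hg2
      have hdiff : g - a ∈ Mv1 n k ^ N := by
        apply mem_Mv1_pow_of_coeff_eq_zero
        intro γ hγ
        have h1 := congrArg (MvPolynomial.coeff γ) hta
        rw [coeff_trN, coeff_trN, if_pos hγ, if_pos hγ] at h1
        rw [map_sub, h1, sub_self]
      have hga : g = a + (g - a) := by ring
      rw [hga]
      exact Submodule.add_mem _ (Submodule.mem_sup_left (by simpa using haI))
        (Submodule.mem_sup_right hdiff)
    have hne : (Submodule.Quotient.mk (trN N g) : MvPolynomial (Fin n) k ⧸ J) ≠ 0 := by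
      exact fun hc => htg ((Submodule.Quotient.mk_eq_zero J).mp hc)
    obtain ⟨φ, hφ⟩ : ∃ φ : Module.Dual k (MvPolynomial (Fin n) k ⧸ J),
        φ (Submodule.Quotient.mk (trN N g)) ≠ 0 := by
      by_contra hall
      push_neg at hall
      exact hne ((Module.forall_dual_apply_eq_zero_iff k _).mp hall)
    set f : MvPolynomial (Fin n) k →ₗ[k] k := φ ∘ₗ J.mkQ with hf
    have hfJ : ∀ x ∈ J, f x = 0 := by
      intro x hx
      rw [hf, LinearMap.comp_apply, Submodule.mkQ_apply,
        (Submodule.Quotient.mk_eq_zero J).mpr hx, map_zero]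
    set F : MvPolynomial (Fin n) k :=
      ∑ γ ∈ lowSet n N, MvPolynomial.monomial γ (f (MvPolynomial.monomial γ 1)) with hF
    have hcoeffF : ∀ γ, MvPolynomial.coeff γ F =
        if γ ∈ lowSet n N then f (MvPolynomial.monomial γ 1) else 0 := fun γ =>
      coeff_sum_monomial _ _ γ
    have hsuppF : F.support ⊆ lowSet n N := by
      intro γ hγ
      rw [MvPolynomial.mem_support_iff, hcoeffF] at hγ
      by_contra hmem
      rw [if_neg hmem] at hγ
      exact hγ rfl
    have hkey : ∀ (b : MvPowerSeries (Fin n) k) (β : Fin n →₀ ℕ),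
        MvPolynomial.coeff β (contract b F) =
          f (trN N (MvPowerSeries.monomial β 1 * b)) := by
      intro b β
      rw [coeff_contract b F hsuppF β]
      have htr : trN N (MvPowerSeries.monomial β 1 * b) =
          ∑ γ ∈ lowSet n N, MvPolynomial.monomial γ
            (if β ≤ γ then MvPowerSeries.coeff (γ - β) b else 0) := by
        rw [trN]
        simp only [LinearMap.coe_mk, AddHom.coe_mk]
        refine Finset.sum_congr rfl fun γ _ => ?_
        rw [MvPowerSeries.coeff_monomial_mul]
        simp only [one_mul]
      rw [htr, map_sum]
      refine Finset.sum_congr rfl fun γ hγ => ?_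
      rw [hcoeffF γ, if_pos hγ]
      by_cases hβγ : β ≤ γ
      · rw [if_pos hβγ, if_pos hβγ, ← smul_eq_mul, ← map_smul, MvPolynomial.smul_monomial,
          smul_eq_mul, mul_one]
      · rw [if_neg hβγ, if_neg hβγ, MvPolynomial.monomial_zero, map_zero]
    have hFperp : F ∈ perp I := by
      rw [mem_perp_iff]
      intro b hb
      apply MvPolynomial.ext
      intro β
      rw [hkey b β, MvPolynomial.coeff_zero]
      apply hfJ
      exact Submodule.mem_map_of_mem (by simpa using Ideal.mul_mem_left _ _ hb)
    have hCg : contract g F ≠ 0 := by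
      intro h0
      have h1 := hkey g 0
      rw [h0, MvPolynomial.coeff_zero, MvPowerSeries.monomial_zero_one, one_mul] at h1
      apply hφ
      have h2 : f (trN N g) = 0 := h1.symm
      rw [hf, LinearMap.comp_apply, Submodule.mkQ_apply] at h2
      exact h2
    have hdF : MvPolynomial.totalDegree F ≤ d := hbound F hFperp
    obtain ⟨β, hβ⟩ := MvPolynomial.ne_zero_iff.mp hCg
    rw [coeff_contract g F (le_refl F.support) β] at hβ
    obtain ⟨γ, hγ, hne0⟩ := Finset.exists_ne_zero_of_sum_ne_zero hβ
    by_cases hβγ : β ≤ γ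
    · rw [if_pos hβγ] at hne0
      have hgc : MvPowerSeries.coeff (γ - β) g ≠ 0 := left_ne_zero_of_mul hne0
      have hd1 : ¬ dg (γ - β) < d + 1 := fun hh =>
        hgc (coeff_eq_zero_of_mem_Mv1_pow hg1 hh)
      have h2 : dg γ ≤ d := le_trans (MvPolynomial.le_totalDegree hγ) hdF
      have h3 : dg β + dg (γ - β) = dg γ := by
        rw [← dg_add, add_tsub_cancel_of_le hβγ]
      omega
    · rw [if_neg hβγ] at hne0
      exact hne0 rfl
end

section
/- Let I ⊊ J be ideals of R such that the Krull dimension of R/J is positive. Then the inverse system I^⊥ is not an almost finitely generated R-module. -/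
/- Context: R = k[[x_1,…,x_n]] acting on Γ = k[y_1,…,y_n] by contraction:
`x^α ∘ y^β = y^{β-α}` if `α ≤ β` componentwise and `0` otherwise, extended
`k`-linearly. -/

open MvPolynomial

variable {n : ℕ} {k : Type} [Field k]

/-- An `R`-submodule `M` of `Γ` is almost finitely generated (a.f.g.) if it is
not finitely generated but every proper submodule of it is finitely generated. -/
def AFG {n : ℕ} {k : Type} [Field k]
    (M : Submodule (MvPowerSeries (Fin n) k) (MvPolynomial (Fin n) k)) : Prop :=
  ¬ M.FG ∧ ∀ N : Submodule (MvPowerSeries (Fin n) k) (MvPolynomial (Fin n) k),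
    N < M → N.FG

/-! ### Auxiliary: degrees and the ideals of power series vanishing in low degrees -/

open Finsupp in
theorem mdeg_add (a b : Fin n →₀ ℕ) : (a + b).degree = a.degree + b.degree := by
  exact map_add _ a b

theorem mdeg_le_of_le {a b : Fin n →₀ ℕ} (h : a ≤ b) : a.degree ≤ b.degree := by
  have : a + (b - a) = b := add_tsub_cancel_of_le h
  calc a.degree ≤ a.degree + (b - a).degree := Nat.le_add_right _ _
  _ = b.degree := by rw [← mdeg_add, this]

open Finsupp in
theorem mdeg_single (i : Fin n) (t : ℕ) : (single i t).degree = t := by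
  classical
  rcases eq_or_ne t 0 with rfl | ht
  · simp [Finsupp.degree]
  · exact Finsupp.degree_single i t

/-- The ideal of power series whose coefficients vanish in degrees `< t`. -/
noncomputable def lowIdeal (t : ℕ) : Ideal (MvPowerSeries (Fin n) k) where
  carrier := {f | ∀ δ : Fin n →₀ ℕ, δ.degree < t → MvPowerSeries.coeff δ f = 0}
  add_mem' := fun {f g} hf hg δ hδ => by rw [map_add, hf δ hδ, hg δ hδ, add_zero]
  zero_mem' := fun δ _ => map_zero _
  smul_mem' := fun c f hf δ hδ => by
    rw [smul_eq_mul, MvPowerSeries.coeff_mul]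
    refine Finset.sum_eq_zero fun p hp => ?_
    rw [Finset.HasAntidiagonal.mem_antidiagonal] at hp
    have : p.2.degree < t := lt_of_le_of_lt (mdeg_le_of_le (hp ▸ le_add_self)) hδ
    rw [hf p.2 this, mul_zero]

theorem mem_lowIdeal_iff {t : ℕ} {f : MvPowerSeries (Fin n) k} :
    f ∈ lowIdeal t ↔ ∀ δ : Fin n →₀ ℕ, δ.degree < t → MvPowerSeries.coeff δ f = 0 :=
  Iff.rfl

theorem lowIdeal_antitone {s t : ℕ} (h : s ≤ t) :
    (lowIdeal t : Ideal (MvPowerSeries (Fin n) k)) ≤ lowIdeal s :=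
  fun _ hf δ hδ => hf δ (lt_of_lt_of_le hδ h)

theorem mul_mem_lowIdeal {a b : ℕ} {f g : MvPowerSeries (Fin n) k}
    (hf : f ∈ lowIdeal a) (hg : g ∈ lowIdeal b) : f * g ∈ lowIdeal (a + b) := by
  intro δ hδ
  rw [MvPowerSeries.coeff_mul]
  refine Finset.sum_eq_zero fun p hp => ?_
  rw [Finset.HasAntidiagonal.mem_antidiagonal] at hp
  have hsum : p.1.degree + p.2.degree = δ.degree := by rw [← mdeg_add, hp]
  by_cases h1 : p.1.degree < a
  · rw [hf p.1 h1, zero_mul]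
  · have : p.2.degree < b := by omega
    rw [hg p.2 this, mul_zero]

theorem monomial_mem_lowIdeal {t : ℕ} {β : Fin n →₀ ℕ} (a : k) (h : t ≤ β.degree) :
    MvPowerSeries.monomial β a ∈ lowIdeal t := by
  intro δ hδ
  rw [MvPowerSeries.coeff_monomial]
  rcases eq_or_ne δ β with rfl | hne
  · omega
  · rw [if_neg hne]

theorem X_pow_mem_lowIdeal (i : Fin n) (t : ℕ) :
    (MvPowerSeries.X i : MvPowerSeries (Fin n) k) ^ t ∈ lowIdeal t := by
  rw [MvPowerSeries.X_pow_eq]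
  exact monomial_mem_lowIdeal 1 (le_of_eq (mdeg_single i t).symm)

/-! ### Initial forms and closure of ideals -/

/-- The finsupp with all coordinates equal to `t`. -/
noncomputable def bigT (n t : ℕ) : Fin n →₀ ℕ := ∑ i : Fin n, Finsupp.single i t

theorem le_bigT {t : ℕ} {δ : Fin n →₀ ℕ} (h : δ.degree ≤ t) : δ ≤ bigT n t := by
  intro i
  calc δ i ≤ δ.degree := Finsupp.le_degree i δ
  _ ≤ t := h
  _ = (bigT n t) i := by
    classical
    simp only [bigT, Finsupp.finset_sum_apply]
    rw [Finset.sum_eq_single i (fun j _ hj => Finsupp.single_eq_of_ne hj.symm)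
      (fun h => absurd (Finset.mem_univ i) h), Finsupp.single_eq_same]

/-- The finite set of exponents of degree exactly `m`. -/
noncomputable def degSet (n m : ℕ) : Finset (Fin n →₀ ℕ) :=
  (Finset.Iic (bigT n m)).filter (fun δ => δ.degree = m)

theorem mem_degSet {m : ℕ} {δ : Fin n →₀ ℕ} : δ ∈ degSet n m ↔ δ.degree = m := by
  constructor
  · exact fun h => (Finset.mem_filter.mp h).2
  · intro h
    exact Finset.mem_filter.mpr ⟨Finset.mem_Iic.mpr (le_bigT (le_of_eq h)), h⟩

/-- The degree-`m` homogeneous component of a power series, as a polynomial. -/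
noncomputable def inF (f : MvPowerSeries (Fin n) k) (m : ℕ) : MvPolynomial (Fin n) k :=
  ∑ δ ∈ degSet n m, MvPolynomial.monomial δ (MvPowerSeries.coeff δ f)

theorem coeff_inF (f : MvPowerSeries (Fin n) k) (m : ℕ) (δ : Fin n →₀ ℕ) :
    MvPolynomial.coeff δ (inF f m) =
      if δ.degree = m then MvPowerSeries.coeff δ f else 0 := by
  classical
  rw [inF, MvPolynomial.coeff_sum]
  by_cases h : δ.degree = m
  · rw [Finset.sum_eq_single δ (fun γ _ hne => by
        rw [MvPolynomial.coeff_monomial, if_neg hne])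
      (fun hmem => absurd (mem_degSet.mpr h) hmem), if_pos h,
      MvPolynomial.coeff_monomial, if_pos rfl]
  · rw [if_neg h]
    refine Finset.sum_eq_zero fun γ hγ => ?_
    rw [MvPolynomial.coeff_monomial, if_neg]
    intro hh
    exact h (hh ▸ mem_degSet.mp hγ)

/-- The closure of an ideal in the adic-type topology given by the `lowIdeal` filtration. -/
noncomputable def clos (K : Ideal (MvPowerSeries (Fin n) k)) : Ideal (MvPowerSeries (Fin n) k) :=
  ⨅ t : ℕ, (K ⊔ lowIdeal t)

theorem mem_clos_iff {K : Ideal (MvPowerSeries (Fin n) k)} {g : MvPowerSeries (Fin n) k} :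
    g ∈ clos K ↔ ∀ t : ℕ, g ∈ K ⊔ lowIdeal t := by
  simp [clos, Submodule.mem_iInf]

theorem le_clos (K : Ideal (MvPowerSeries (Fin n) k)) : K ≤ clos K :=
  le_iInf fun _ => le_sup_left

/-! ### Every ideal of the power series ring is closed -/

theorem span_eq_span_finset {A : Type} [CommRing A] [IsNoetherianRing A] (s : Set A) :
    ∃ t : Finset A, ↑t ⊆ s ∧ Ideal.span (↑t : Set A) = Ideal.span s := by
  classical
  have hfg : (Ideal.span s).FG := IsNoetherian.noetherian _
  obtain ⟨G, hG⟩ := hfg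
  have hmem : ∀ x : {y // y ∈ G}, ∃ T : Finset A, ↑T ⊆ s ∧
      (x : A) ∈ Submodule.span A (T : Set A) := by
    intro x
    have : (x : A) ∈ Ideal.span s := by
      rw [← hG]
      exact Submodule.subset_span x.2
    exact Submodule.mem_span_finite_of_mem_span this
  choose T hTs hxT using hmem
  refine ⟨G.attach.biUnion T, ?_, ?_⟩
  · intro x hx
    simp only [Finset.coe_biUnion, Set.mem_iUnion] at hx
    obtain ⟨y, -, hy⟩ := hx
    exact hTs y hy
  · refine le_antisymm (Ideal.span_mono ?_) ?_
    · intro x hx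
      simp only [Finset.coe_biUnion, Set.mem_iUnion] at hx
      obtain ⟨y, -, hy⟩ := hx
      exact hTs y hy
    · rw [← hG]
      rw [Ideal.span_le]
      intro x hx
      refine Submodule.span_mono ?_ (hxT ⟨x, hx⟩)
      intro z hz
      simp only [Finset.coe_biUnion, Set.mem_iUnion]
      exact ⟨⟨x, hx⟩, Finset.mem_attach _ _, hz⟩

theorem clos_step {K : Ideal (MvPowerSeries (Fin n) k)} {ι : Type} [Fintype ι]
    (f : ι → MvPowerSeries (Fin n) k) (d : ι → ℕ)
    (hfE : ∀ i, f i ∈ lowIdeal (d i))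
    (hspan : ∀ h ∈ K, ∀ m : ℕ, h ∈ lowIdeal m →
      inF h m ∈ Ideal.span (Set.range fun i => inF (f i) (d i)))
    (m : ℕ) (g : MvPowerSeries (Fin n) k) (hg : g ∈ clos K) (hgE : g ∈ lowIdeal m) :
    ∃ c : ι → MvPowerSeries (Fin n) k, (∀ i, c i ∈ lowIdeal (m - d i)) ∧
      g - ∑ i, c i * f i ∈ lowIdeal (m + 1) := by
  classical
  obtain ⟨h, hhK, z, hz, hhz⟩ := Submodule.mem_sup.mp (mem_clos_iff.mp hg (m + 1))
  have hgh : g - h ∈ lowIdeal (m + 1) := by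
    have : g - h = z := by rw [← hhz]; ring
    rw [this]; exact hz
  have hhE : h ∈ lowIdeal m := by
    intro δ hδ
    have h1 : MvPowerSeries.coeff δ (g - h) = 0 := hgh δ (by omega)
    have h2 : MvPowerSeries.coeff δ g = 0 := hgE δ hδ
    rw [map_sub] at h1
    rw [h2, zero_sub, neg_eq_zero] at h1
    exact h1
  have hform : inF h m = inF g m := by
    apply MvPolynomial.ext
    intro δ
    rw [coeff_inF, coeff_inF]
    by_cases hδ : δ.degree = m
    · rw [if_pos hδ, if_pos hδ]
      have h1 : MvPowerSeries.coeff δ (g - h) = 0 := hgh δ (by omega)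
      rw [map_sub, sub_eq_zero] at h1
      exact h1.symm
    · rw [if_neg hδ, if_neg hδ]
  have hmem : inF g m ∈ Ideal.span (Set.range fun i => inF (f i) (d i)) := by
    rw [← hform]
    exact hspan h hhK m hhE
  obtain ⟨P, hP⟩ := (Submodule.mem_span_range_iff_exists_fun _).mp hmem
  refine ⟨fun i => ((MvPolynomial.homogeneousComponent (m - d i) (P i) :
      MvPolynomial (Fin n) k) : MvPowerSeries (Fin n) k), fun i => ?_, ?_⟩
  · intro δ hδ
    rw [MvPolynomial.coeff_coe, MvPolynomial.coeff_homogeneousComponent, if_neg (by omega)]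
  · -- the coefficient computation
    have claim1 : ∀ i, ∀ δ : Fin n →₀ ℕ, δ.degree < m →
        MvPowerSeries.coeff δ
          (((MvPolynomial.homogeneousComponent (m - d i) (P i) : MvPolynomial (Fin n) k) :
            MvPowerSeries (Fin n) k) * f i) = 0 := by
      intro i δ hδ
      rw [MvPowerSeries.coeff_mul]
      refine Finset.sum_eq_zero fun p hp => ?_
      rw [Finset.HasAntidiagonal.mem_antidiagonal] at hp
      have hdeg : p.1.degree + p.2.degree = δ.degree := by rw [← mdeg_add, hp]
      by_cases hv : p.2.degree < d i
      · rw [hfE i p.2 hv, mul_zero]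
      · rw [MvPolynomial.coeff_coe, MvPolynomial.coeff_homogeneousComponent,
          if_neg (by omega), zero_mul]
    have claim2 : ∀ i, ∀ δ : Fin n →₀ ℕ, δ.degree = m →
        MvPowerSeries.coeff δ
          (((MvPolynomial.homogeneousComponent (m - d i) (P i) : MvPolynomial (Fin n) k) :
            MvPowerSeries (Fin n) k) * f i) =
          MvPolynomial.coeff δ (P i * inF (f i) (d i)) := by
      intro i δ hδ
      rw [MvPowerSeries.coeff_mul, MvPolynomial.coeff_mul]
      refine Finset.sum_congr rfl fun p hp => ?_
      rw [Finset.HasAntidiagonal.mem_antidiagonal] at hp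
      have hdeg : p.1.degree + p.2.degree = δ.degree := by rw [← mdeg_add, hp]
      rw [MvPolynomial.coeff_coe, MvPolynomial.coeff_homogeneousComponent, coeff_inF]
      by_cases hv : p.2.degree = d i
      · rw [if_pos hv, if_pos (by omega)]
      · rw [if_neg hv]
        by_cases hv2 : p.2.degree < d i
        · rw [hfE i p.2 hv2, mul_zero, mul_zero]
        · rw [if_neg (by omega), zero_mul, mul_zero]
    intro δ hδ
    have hδm : δ.degree ≤ m := by omega
    rw [map_sub, map_sum]
    rcases lt_or_eq_of_le hδm with hlt | heq
    · rw [hgE δ hlt, Finset.sum_congr rfl fun i _ => claim1 i δ hlt]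
      simp
    · rw [Finset.sum_congr rfl fun i _ => claim2 i δ heq]
      have : ∑ i, MvPolynomial.coeff δ (P i * inF (f i) (d i)) =
          MvPolynomial.coeff δ (∑ i, P i • inF (f i) (d i)) := by
        rw [MvPolynomial.coeff_sum]
        exact Finset.sum_congr rfl fun i _ => by rw [smul_eq_mul]
      rw [this, hP, coeff_inF, if_pos heq, sub_self]

theorem clos_le_self (K : Ideal (MvPowerSeries (Fin n) k)) : clos K ≤ K := by
  classical
  -- pick finitely many elements of `K` whose initial forms generate the ideal of all
  -- initial forms of elements of `K`
  set S₀ : Set (MvPolynomial (Fin n) k) :=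
    {P | ∃ f ∈ K, ∃ m : ℕ, f ∈ lowIdeal m ∧ inF f m = P} with hS₀
  obtain ⟨t, hts, htspan⟩ := span_eq_span_finset S₀
  have hw : ∀ P : {x // x ∈ t}, ∃ q : MvPowerSeries (Fin n) k × ℕ,
      q.1 ∈ K ∧ q.1 ∈ lowIdeal q.2 ∧ inF q.1 q.2 = (P : MvPolynomial (Fin n) k) := by
    intro P
    obtain ⟨f, hf, m, hm, he⟩ := hts P.2
    exact ⟨(f, m), hf, hm, he⟩
  choose q hqK hqE hqF using hw
  set f : {x // x ∈ t} → MvPowerSeries (Fin n) k := fun i => (q i).1 with hf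
  set d : {x // x ∈ t} → ℕ := fun i => (q i).2 with hd
  have hrange : (Set.range fun i => inF (f i) (d i)) = (↑t : Set (MvPolynomial (Fin n) k)) := by
    ext x
    constructor
    · rintro ⟨i, rfl⟩
      show inF ((q i).1) ((q i).2) ∈ (↑t : Set (MvPolynomial (Fin n) k))
      rw [hqF i]
      exact i.2
    · intro hx
      exact ⟨⟨x, hx⟩, hqF _⟩
  have hspan : ∀ h ∈ K, ∀ m : ℕ, h ∈ lowIdeal m →
      inF h m ∈ Ideal.span (Set.range fun i => inF (f i) (d i)) := by
    intro h hh m hm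
    rw [hrange, htspan]
    exact Ideal.subset_span ⟨h, hh, m, hm, rfl⟩
  intro g hg
  -- the sequence of successive approximations
  let stepc : ℕ → MvPowerSeries (Fin n) k → ({x // x ∈ t} → MvPowerSeries (Fin n) k) :=
    fun m g' => if h : g' ∈ clos K ∧ g' ∈ lowIdeal m then
      Classical.choose (clos_step f d hqE hspan m g' h.1 h.2) else 0
  let seq : ℕ → MvPowerSeries (Fin n) k :=
    fun s => Nat.rec g (fun s' gs => gs - ∑ i, stepc s' gs i * f i) s
  have hseq_succ : ∀ s, seq (s + 1) = seq s - ∑ i, stepc s (seq s) i * f i := fun s => rfl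
  have hinv : ∀ s, seq s ∈ clos K ∧ seq s ∈ lowIdeal s := by
    intro s
    induction s with
    | zero => exact ⟨hg, fun δ hδ => by omega⟩
    | succ s ih =>
      have hdef : stepc s (seq s) =
          Classical.choose (clos_step f d hqE hspan s (seq s) ih.1 ih.2) := by
        simp only [stepc, dif_pos (And.intro ih.1 ih.2)]
      have hspec := Classical.choose_spec (clos_step f d hqE hspan s (seq s) ih.1 ih.2)
      constructor
      · rw [hseq_succ s]
        exact Submodule.sub_mem _ ih.1
          (le_clos K (Ideal.sum_mem _ fun i _ => Ideal.mul_mem_left _ _ (hqK i)))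
      · rw [hseq_succ s, hdef]
        exact hspec.2
  set cc : ℕ → {x // x ∈ t} → MvPowerSeries (Fin n) k := fun s => stepc s (seq s) with hcc'
  have hccE : ∀ s i, cc s i ∈ lowIdeal (s - d i) := by
    intro s i
    have hdef : cc s = Classical.choose
        (clos_step f d hqE hspan s (seq s) (hinv s).1 (hinv s).2) := by
      simp only [hcc', stepc, dif_pos (And.intro (hinv s).1 (hinv s).2)]
    rw [hdef]
    exact (Classical.choose_spec (clos_step f d hqE hspan s (seq s) (hinv s).1 (hinv s).2)).1 i
  have htel : ∀ s, g - ∑ i, (∑ s' ∈ Finset.range s, cc s' i) * f i = seq s := by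
    intro s
    induction s with
    | zero => simp [seq]
    | succ s ih =>
      have hstep : seq (s + 1) = seq s - ∑ i, cc s i * f i := hseq_succ s
      rw [hstep, ← ih]
      simp only [Finset.sum_range_succ, add_mul]
      rw [Finset.sum_add_distrib]
      ring
  -- the limits of the coefficient sequences
  let u : {x // x ∈ t} → MvPowerSeries (Fin n) k := fun i =>
    (fun δ => ∑ s ∈ Finset.range (δ.degree + d i + 1), MvPowerSeries.coeff δ (cc s i) :
      (Fin n →₀ ℕ) → k)
  have hu_coeff : ∀ i δ, MvPowerSeries.coeff δ (u i) =
      ∑ s ∈ Finset.range (δ.degree + d i + 1), MvPowerSeries.coeff δ (cc s i) := fun i δ => rfl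
  have hfin : g = ∑ i, u i * f i := by
    apply MvPowerSeries.ext
    intro δ
    have h1 : g = (∑ i, (∑ s' ∈ Finset.range (δ.degree + 1), cc s' i) * f i) +
        seq (δ.degree + 1) := by
      rw [← htel (δ.degree + 1)]
      ring
    have h2 : MvPowerSeries.coeff δ (seq (δ.degree + 1)) = 0 :=
      (hinv (δ.degree + 1)).2 δ (by omega)
    rw [h1, map_add, h2, add_zero, map_sum, map_sum]
    refine Finset.sum_congr rfl fun i _ => ?_
    rw [MvPowerSeries.coeff_mul, MvPowerSeries.coeff_mul]
    refine Finset.sum_congr rfl fun p hp => ?_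
    rw [Finset.HasAntidiagonal.mem_antidiagonal] at hp
    have hdeg : p.1.degree + p.2.degree = δ.degree := by rw [← mdeg_add, hp]
    by_cases hv : p.2.degree < d i
    · rw [hqE i p.2 hv, mul_zero, mul_zero]
    · have hle : p.1.degree + d i + 1 ≤ δ.degree + 1 := by omega
      have : MvPowerSeries.coeff p.1 (u i) =
          MvPowerSeries.coeff p.1 (∑ s' ∈ Finset.range (δ.degree + 1), cc s' i) := by
        rw [hu_coeff, map_sum]
        refine Finset.sum_subset (Finset.range_subset_range.mpr hle) fun s hs hs' => ?_
        rw [Finset.mem_range] at hs hs'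
        exact hccE s i p.1 (by omega)
      rw [this]
  rw [hfin]
  exact Ideal.sum_mem _ fun i _ => Ideal.mul_mem_left _ _ (hqK i)

/-! ### Separation: detecting non-membership by the inverse system -/

theorem coeff_zero_contract (h : MvPowerSeries (Fin n) k) (F : MvPolynomial (Fin n) k)
    {S : Finset (Fin n →₀ ℕ)} (hS : F.support ⊆ S) :
    MvPolynomial.coeff 0 (contract h F) =
      ∑ γ ∈ S, MvPowerSeries.coeff γ h * MvPolynomial.coeff γ F := by
  rw [coeff_contract h F hS 0]
  refine Finset.sum_congr rfl fun γ _ => ?_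
  rw [if_pos zero_le, tsub_zero]

theorem coeff_contract_monomial (β δ : Fin n →₀ ℕ) (F : MvPolynomial (Fin n) k) :
    MvPolynomial.coeff δ (contract (MvPowerSeries.monomial β 1) F) =
      MvPolynomial.coeff (δ + β) F := by
  classical
  rw [coeff_contract _ F (le_refl F.support) δ]
  by_cases hmem : δ + β ∈ F.support
  · rw [Finset.sum_eq_single (δ + β)]
    · rw [if_pos le_self_add, MvPowerSeries.coeff_monomial,
        if_pos (add_tsub_cancel_left δ β), one_mul]
    · intro γ hγ hne
      by_cases hle : δ ≤ γ
      · rw [if_pos hle, MvPowerSeries.coeff_monomial, if_neg, zero_mul]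
        intro hh
        exact hne (by rw [← hh, add_tsub_cancel_of_le hle])
      · rw [if_neg hle]
    · intro hh
      exact absurd hmem hh
  · rw [MvPolynomial.notMem_support_iff.mp hmem]
    refine Finset.sum_eq_zero fun γ hγ => ?_
    by_cases hle : δ ≤ γ
    · rw [if_pos hle, MvPowerSeries.coeff_monomial, if_neg, zero_mul]
      intro hh
      exact hmem (by rw [← hh, add_tsub_cancel_of_le hle]; exact hγ)
    · rw [if_neg hle]

theorem coeff_contract_eq_coeff_zero (h : MvPowerSeries (Fin n) k)
    (F : MvPolynomial (Fin n) k) (β : Fin n →₀ ℕ) :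
    MvPolynomial.coeff β (contract h F) =
      MvPolynomial.coeff 0 (contract (MvPowerSeries.monomial β 1 * h) F) := by
  rw [mul_contract, coeff_contract_monomial β 0 (contract h F), zero_add]

theorem sep_core (K' : Ideal (MvPowerSeries (Fin n) k)) (t : ℕ)
    (hK' : lowIdeal t ≤ K') {g : MvPowerSeries (Fin n) k} (hg : g ∉ K') :
    ∃ F : MvPolynomial (Fin n) k, F ∈ perp K' ∧ contract g F ≠ 0 := by
  classical
  set S : Finset (Fin n →₀ ℕ) := (Finset.Iic (bigT n t)).filter (fun δ => δ.degree < t) with hS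
  have hSmem : ∀ δ : Fin n →₀ ℕ, δ.degree < t → δ ∈ S := fun δ h =>
    Finset.mem_filter.mpr ⟨Finset.mem_Iic.mpr (le_bigT (le_of_lt h)), h⟩
  set π : MvPowerSeries (Fin n) k →ₗ[k] ({x // x ∈ S} → k) :=
    LinearMap.pi (fun δ => MvPowerSeries.coeff δ.1) with hπ
  have hπ_apply : ∀ (h : MvPowerSeries (Fin n) k) (δ : {x // x ∈ S}),
      π h δ = MvPowerSeries.coeff δ.1 h := fun h δ => rfl
  set W : Submodule k ({x // x ∈ S} → k) :=
    Submodule.map π (Submodule.restrictScalars k K') with hW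
  have hgW : π g ∉ W := by
    rintro ⟨h, hh, hπh⟩
    apply hg
    have hdiff : g - h ∈ lowIdeal t := by
      intro δ hδ
      have h1 := congrFun hπh ⟨δ, hSmem δ hδ⟩
      rw [hπ_apply, hπ_apply] at h1
      rw [map_sub, h1, sub_self]
    have hgh : g = h + (g - h) := by ring
    rw [hgh]
    exact Submodule.add_mem _ hh (hK' hdiff)
  obtain ⟨φ, hφg, hφW⟩ := Submodule.exists_dual_map_eq_bot_of_notMem hgW inferInstance
  set F : MvPolynomial (Fin n) k :=
    ∑ δ ∈ S.attach, MvPolynomial.monomial δ.1 (φ (Pi.single δ 1)) with hF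
  have hFcoeff : ∀ γ (hγ : γ ∈ S), MvPolynomial.coeff γ F = φ (Pi.single ⟨γ, hγ⟩ 1) := by
    intro γ hγ
    rw [hF, MvPolynomial.coeff_sum, Finset.sum_eq_single ⟨γ, hγ⟩]
    · rw [MvPolynomial.coeff_monomial, if_pos rfl]
    · intro δ _ hne
      rw [MvPolynomial.coeff_monomial, if_neg]
      intro hh
      exact hne (Subtype.ext hh)
    · intro hh
      exact absurd (Finset.mem_attach _ _) hh
  have hFout : ∀ γ, γ ∉ S → MvPolynomial.coeff γ F = 0 := by
    intro γ hγ
    rw [hF, MvPolynomial.coeff_sum]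
    refine Finset.sum_eq_zero fun δ _ => ?_
    rw [MvPolynomial.coeff_monomial, if_neg]
    intro hh
    exact hγ (hh ▸ δ.2)
  have hFsupp : F.support ⊆ S := by
    intro γ hγ
    by_contra hγS
    exact MvPolynomial.mem_support_iff.mp hγ (hFout γ hγS)
  have key : ∀ h : MvPowerSeries (Fin n) k,
      MvPolynomial.coeff 0 (contract h F) = φ (π h) := by
    intro h
    rw [coeff_zero_contract h F hFsupp]
    have hdec : π h = ∑ δ ∈ S.attach, Pi.single δ (MvPowerSeries.coeff δ.1 h) := by
      rw [← Finset.univ_eq_attach]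
      exact (Finset.univ_sum_single (π h)).symm
    rw [hdec, map_sum, ← Finset.sum_attach S
      (fun γ => MvPowerSeries.coeff γ h * MvPolynomial.coeff γ F)]
    refine Finset.sum_congr rfl fun δ _ => ?_
    rw [hFcoeff δ.1 δ.2]
    have hsingle : Pi.single δ (MvPowerSeries.coeff δ.1 h) =
        (MvPowerSeries.coeff δ.1 h) • (Pi.single δ 1 : {x // x ∈ S} → k) := by
      rw [← Pi.single_smul, smul_eq_mul, mul_one]
    rw [hsingle, map_smul, smul_eq_mul]
  have hπW : ∀ h ∈ K', φ (π h) = 0 := by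
    intro h hh
    have : φ (π h) ∈ Submodule.map φ W :=
      Submodule.mem_map_of_mem (Submodule.mem_map_of_mem hh)
    rw [hφW] at this
    exact (Submodule.mem_bot k).mp this
  refine ⟨F, ?_, ?_⟩
  · intro h hh
    apply MvPolynomial.ext
    intro β
    rw [MvPolynomial.coeff_zero, coeff_contract_eq_coeff_zero, key,
      hπW _ (Ideal.mul_mem_left _ _ hh)]
  · intro hzero
    apply hφg
    rw [← key, hzero, MvPolynomial.coeff_zero]

theorem perp_antitone {K K' : Ideal (MvPowerSeries (Fin n) k)} (h : K ≤ K') :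
    perp K' ≤ perp K := fun _ hF g hg => hF g (h hg)

theorem exists_sep {K : Ideal (MvPowerSeries (Fin n) k)} {g : MvPowerSeries (Fin n) k}
    (hg : g ∉ K) : ∃ F : MvPolynomial (Fin n) k, F ∈ perp K ∧ contract g F ≠ 0 := by
  have ht : ∃ t : ℕ, g ∉ K ⊔ lowIdeal t := by
    by_contra hcon
    push_neg at hcon
    exact hg (clos_le_self K (mem_clos_iff.mpr hcon))
  obtain ⟨t, hgt⟩ := ht
  obtain ⟨F, hFperp, hFne⟩ := sep_core (K ⊔ lowIdeal t) t le_sup_right hgt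
  exact ⟨F, perp_antitone le_sup_left hFperp, hFne⟩

/-! ### Finitely generated submodules of `Γ` are bounded in degree -/

theorem bounded_of_fg {N : Submodule (MvPowerSeries (Fin n) k) (MvPolynomial (Fin n) k)}
    (hfg : N.FG) : ∃ d : ℕ, ∀ F ∈ N, ∀ γ ∈ F.support, γ.degree < d := by
  classical
  obtain ⟨G, hG⟩ := hfg
  set T : Finset (Fin n →₀ ℕ) := G.biUnion (fun F => F.support.biUnion Finset.Iic) with hT
  have hTclosed : ∀ δ ∈ T, ∀ η ≤ δ, η ∈ T := by
    intro δ hδ η hη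
    obtain ⟨F, hF, hmem⟩ := Finset.mem_biUnion.mp hδ
    obtain ⟨γ, hγ, hle⟩ := Finset.mem_biUnion.mp hmem
    exact Finset.mem_biUnion.mpr ⟨F, hF, Finset.mem_biUnion.mpr
      ⟨γ, hγ, Finset.mem_Iic.mpr (le_trans hη (Finset.mem_Iic.mp hle))⟩⟩
  have hsupp : ∀ F ∈ N, F.support ⊆ T := by
    intro F hF
    rw [← hG] at hF
    refine Submodule.span_induction (p := fun F _ => F.support ⊆ (T : Finset (Fin n →₀ ℕ)))
      ?_ ?_ ?_ ?_ hF
    · intro x hx γ hγ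
      exact Finset.mem_biUnion.mpr ⟨x, hx, Finset.mem_biUnion.mpr
        ⟨γ, hγ, Finset.mem_Iic.mpr le_rfl⟩⟩
    · intro γ hγ
      simp at hγ
    · intro x y _ _ hx hy γ hγ
      rcases Finset.mem_union.mp (MvPolynomial.support_add hγ) with h | h
      · exact hx h
      · exact hy h
    · intro c x _ hx γ hγ
      rw [smul_def] at hγ
      obtain ⟨δ, hδ, hle⟩ := Finset.mem_biUnion.mp (support_contract_subset c x hγ)
      exact hTclosed δ (hx hδ) γ (Finset.mem_Iic.mp hle)
  refine ⟨1 + T.sup Finsupp.degree, fun F hF γ hγ => ?_⟩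
  have := Finset.le_sup (f := Finsupp.degree) (hsupp F hF hγ)
  omega

/-! ### Power series without constant term lie in the ideal generated by the variables -/

theorem lowIdeal_one_le_spanX :
    (lowIdeal 1 : Ideal (MvPowerSeries (Fin n) k)) ≤
      Ideal.span (Set.range (MvPowerSeries.X : Fin n → MvPowerSeries (Fin n) k)) := by
  intro f hf
  apply clos_le_self
  rw [mem_clos_iff]
  intro t
  classical
  set idx : Finset (Fin n →₀ ℕ) := (Finset.Iic (bigT n t)).filter
      (fun δ => 0 < δ.degree ∧ δ.degree < t) with hidx
  have hidx_mem : ∀ δ : Fin n →₀ ℕ, (0 < δ.degree ∧ δ.degree < t) → δ ∈ idx := fun δ h =>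
    Finset.mem_filter.mpr ⟨Finset.mem_Iic.mpr (le_bigT (le_of_lt h.2)), h⟩
  set P : MvPowerSeries (Fin n) k :=
    ∑ δ ∈ idx, MvPowerSeries.monomial δ (MvPowerSeries.coeff δ f) with hP
  have hPspan : P ∈ Ideal.span (Set.range (MvPowerSeries.X : Fin n → MvPowerSeries (Fin n) k)) := by
    refine Ideal.sum_mem _ fun δ hδ => ?_
    obtain ⟨hδ1, hδ2⟩ := (Finset.mem_filter.mp hδ).2
    have hδ0 : δ ≠ 0 := by
      intro h
      rw [h, map_zero] at hδ1
      omega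
    obtain ⟨i, hi⟩ := Finsupp.support_nonempty_iff.mpr hδ0
    have hle : Finsupp.single i 1 ≤ δ := by
      intro j
      by_cases hj : j = i
      · subst hj
        rw [Finsupp.single_eq_same]
        exact Nat.one_le_iff_ne_zero.mpr (Finsupp.mem_support_iff.mp hi)
      · rw [Finsupp.single_eq_of_ne hj]
        exact Nat.zero_le _
    have hfact : MvPowerSeries.monomial δ (MvPowerSeries.coeff δ f) =
        MvPowerSeries.X i *
          MvPowerSeries.monomial (δ - Finsupp.single i 1) (MvPowerSeries.coeff δ f) := by
      rw [MvPowerSeries.X_def, MvPowerSeries.monomial_mul_monomial, one_mul,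
        add_tsub_cancel_of_le hle]
    rw [hfact]
    exact Ideal.mul_mem_right _ _ (Ideal.subset_span ⟨i, rfl⟩)
  have htail : f - P ∈ lowIdeal t := by
    intro δ hδ
    have hPc : MvPowerSeries.coeff δ P = MvPowerSeries.coeff δ f := by
      rcases Nat.eq_zero_or_pos δ.degree with h0 | hpos
      · have hδ0 : δ = 0 := (Finsupp.degree_eq_zero_iff δ).mp h0
        have hf0 : MvPowerSeries.coeff δ f = 0 := hf δ (by omega)
        rw [hf0, hP, map_sum]
        refine Finset.sum_eq_zero fun γ hγ => ?_
        rw [MvPowerSeries.coeff_monomial, if_neg]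
        intro hh
        obtain ⟨hγ1, -⟩ := (Finset.mem_filter.mp hγ).2
        rw [← hh, hδ0, map_zero] at hγ1
        omega
      · rw [hP, map_sum, Finset.sum_eq_single δ]
        · rw [MvPowerSeries.coeff_monomial, if_pos rfl]
        · intro γ _ hne
          rw [MvPowerSeries.coeff_monomial, if_neg (Ne.symm hne)]
        · intro hh
          exact absurd (hidx_mem δ ⟨hpos, hδ⟩) hh
    rw [map_sub, hPc, sub_self]
  exact Submodule.mem_sup.mpr ⟨P, hPspan, f - P, htail, by ring⟩

/-! ### Positive Krull dimension gives a chain of two primes -/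

theorem exists_lt_of_krullDim_pos {α : Type*} [Preorder α] (h : 0 < Order.krullDim α) :
    ∃ a b : α, a < b := by
  by_contra hcon
  push_neg at hcon
  have hlen : ∀ p : LTSeries α, p.length = 0 := by
    intro p
    by_contra hp
    have h1 : 0 < p.length := Nat.pos_of_ne_zero hp
    exact hcon (p 0) (p ⟨1, by omega⟩) (p.strictMono (by
      show (0 : Fin (p.length + 1)) < ⟨1, by omega⟩
      simp [Fin.lt_def]))
  have h2 : Order.krullDim α ≤ 0 := by
    unfold Order.krullDim
    refine iSup_le fun p => ?_
    rw [hlen p]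
    exact le_of_eq (by norm_num)
  exact absurd h (not_lt.mpr h2)

/-- if `I ⊊ J` and the Krull dimension of `R/J` is positive, then
`I^⊥` is not an almost finitely generated `R`-module. -/
theorem perp_not_afg_of_lt {n : ℕ} {k : Type} [Field k] (hn : 1 ≤ n)
    (I J : Ideal (MvPowerSeries (Fin n) k)) (hIJ : I < J)
    (hdim : 0 < ringKrullDim (MvPowerSeries (Fin n) k ⧸ J)) :
    ¬ AFG (perp I) := by
  rintro ⟨hnfg, hall⟩
  -- extract a chain of two primes over `J`
  obtain ⟨q0, q1, hq⟩ := exists_lt_of_krullDim_pos hdim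
  set P0 : Ideal (MvPowerSeries (Fin n) k) := Ideal.comap (Ideal.Quotient.mk J) q0.asIdeal
    with hP0def
  set P1 : Ideal (MvPowerSeries (Fin n) k) := Ideal.comap (Ideal.Quotient.mk J) q1.asIdeal
    with hP1def
  haveI := q0.isPrime
  haveI := q1.isPrime
  have hprime0 : P0.IsPrime := Ideal.IsPrime.comap _
  have hprime1 : P1.IsPrime := Ideal.IsPrime.comap _
  have hJP0 : J ≤ P0 := by
    intro x hx
    show Ideal.Quotient.mk J x ∈ q0.asIdeal
    rw [Ideal.Quotient.eq_zero_iff_mem.mpr hx]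
    exact q0.asIdeal.zero_mem
  have hq01 : q0.asIdeal < q1.asIdeal := by
    refine lt_of_le_of_ne hq.le fun h => ?_
    exact hq.ne (PrimeSpectrum.ext h)
  have hP0P1 : P0 ≤ P1 := Ideal.comap_mono hq01.le
  have hPne : P0 ≠ P1 := by
    intro h
    exact hq01.ne (Ideal.comap_injective_of_surjective _ Ideal.Quotient.mk_surjective h)
  -- the inverse system of `J` is a proper submodule of that of `I`
  obtain ⟨g, hgJ, hgI⟩ := SetLike.exists_of_lt hIJ
  obtain ⟨F0, hF0, hF0ne⟩ := exists_sep hgI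
  have hJI : perp J < perp I := by
    refine lt_of_le_of_ne (perp_antitone hIJ.le) fun heq => ?_
    have hmem : F0 ∈ perp J := heq ▸ hF0
    exact hF0ne (hmem g hgJ)
  -- hence `perp J` is finitely generated, hence bounded in degree
  obtain ⟨d, hd⟩ := bounded_of_fg (hall _ hJI)
  -- so all `d`-th powers of the variables lie in `J`
  have hXd : ∀ i : Fin n, (MvPowerSeries.X i : MvPowerSeries (Fin n) k) ^ d ∈ J := by
    intro i
    by_contra hni
    obtain ⟨F, hFJ, hFne⟩ := exists_sep hni
    apply hFne
    rw [MvPowerSeries.X_pow_eq]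
    apply MvPolynomial.ext
    intro δ
    rw [coeff_contract_monomial, MvPolynomial.coeff_zero]
    by_cases hmem : δ + Finsupp.single i d ∈ F.support
    · have hb := hd F hFJ _ hmem
      rw [mdeg_add, mdeg_single] at hb
      omega
    · exact MvPolynomial.notMem_support_iff.mp hmem
  have hXP0 : ∀ i : Fin n, (MvPowerSeries.X i : MvPowerSeries (Fin n) k) ∈ P0 := fun i =>
    hprime0.mem_of_pow_mem d (hJP0 (hXd i))
  -- but then `P1 ≤ P0`, a contradiction
  have hP1le : P1 ≤ P0 := by
    intro h hh
    have hnu : ¬ IsUnit h := fun hu => hprime1.ne_top (Ideal.eq_top_of_isUnit_mem _ hh hu)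
    have hc0 : MvPowerSeries.constantCoeff h = 0 := by
      by_contra hc
      exact hnu (MvPowerSeries.isUnit_iff_constantCoeff.mpr (isUnit_iff_ne_zero.mpr hc))
    have hlow : h ∈ lowIdeal 1 := by
      intro δ hδ
      have hδ0 : δ = 0 := (Finsupp.degree_eq_zero_iff δ).mp (by omega)
      rw [hδ0, MvPowerSeries.coeff_zero_eq_constantCoeff_apply]
      exact hc0
    have hmem := lowIdeal_one_le_spanX hlow
    refine Ideal.span_le.mpr ?_ hmem
    rintro x ⟨i, rfl⟩
    exact hXP0 i
  exact hPne (le_antisymm hP0P1 hP1le)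
end

section
/- Let I be an ideal of R such that the inverse system I^⊥ admits a G-admissible system of generators {H_t}_{t≥1} with respect to a linear form z ∈ R (this holds precisely when A = R/I is a one-dimensional Gorenstein ring). Then for every H ∈ I^⊥ there exist r ∈ ℕ and F ∈ R such that H = F ∘ H_r. -/
/- Context: R = k[[x_1,…,x_n]] acting on Γ = k[y_1,…,y_n] by contraction:
`x^α ∘ y^β = y^{β-α}` if `α ≤ β` componentwise and `0` otherwise, extended
`k`-linearly. -/

open MvPolynomial

variable {n : ℕ} {k : Type} [Field k]

/-- A linear form in `R = k[[x_1,…,x_n]]`: an element `z = c_1 x_1 + ⋯ + c_n x_n`. -/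
def IsLinearForm {n : ℕ} {k : Type} [Field k] (z : MvPowerSeries (Fin n) k) : Prop :=
  ∃ c : Fin n → k, z = ∑ i, c i • MvPowerSeries.X i

/-- `{H_l}_{l ≥ 1}` is a G-admissible system of generators of the `R`-submodule
`M` of `Γ` with respect to the linear form `z`: the `H_l` (for `l ≥ 1`) generate
`M`, `z ∘ H_l = H_{l-1}` for `l > 1`, `z ∘ H_1 = 0`, and
`Ann_R(⟨H_l⟩) ∘ H_{l+1} = ⟨H_1⟩ (= R ∘ H_1)` for every `l ≥ 1`. -/
def IsGAdmissibleSystem {n : ℕ} {k : Type} [Field k] (z : MvPowerSeries (Fin n) k)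
    (H : ℕ → MvPolynomial (Fin n) k)
    (M : Submodule (MvPowerSeries (Fin n) k) (MvPolynomial (Fin n) k)) : Prop :=
  IsLinearForm z ∧
  M = Submodule.span (MvPowerSeries (Fin n) k) {F | ∃ l : ℕ, 1 ≤ l ∧ F = H l} ∧
  (∀ l : ℕ, 2 ≤ l → contract z (H l) = H (l - 1)) ∧
  contract z (H 1) = 0 ∧
  (∀ l : ℕ, 1 ≤ l →
    {F | ∃ g : MvPowerSeries (Fin n) k, contract g (H l) = 0 ∧ F = contract g (H (l + 1))} =
      {F | ∃ q : MvPowerSeries (Fin n) k, F = contract q (H 1)})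

/-- if `I^⊥` admits a G-admissible system of generators `{H_t}_{t≥1}`
with respect to a linear form `z`, then every `H ∈ I^⊥` has the form `F ∘ H_r`
for some `r ∈ ℕ` (with `r ≥ 1`) and some `F ∈ R`. -/
theorem exists_contract_of_mem_perp {n : ℕ} {k : Type} [Field k] (hn : 1 ≤ n)
    (I : Ideal (MvPowerSeries (Fin n) k)) (z : MvPowerSeries (Fin n) k)
    (H : ℕ → MvPolynomial (Fin n) k)
    (hG : IsGAdmissibleSystem z H (perp I)) :
    ∀ G ∈ perp I, ∃ r : ℕ, 1 ≤ r ∧ ∃ F : MvPowerSeries (Fin n) k,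
      G = contract F (H r) := by
  obtain ⟨hz, hspan, hstep, h1, _⟩ := hG
  -- key: H r = contract (z^d) (H (r+d))
  have key : ∀ d r : ℕ, 1 ≤ r → H r = contract (z ^ d) (H (r + d)) := by
    intro d
    induction d with
    | zero => intro r _; simp [one_contract]
    | succ d ih =>
      intro r hr
      have h2 : 2 ≤ r + d + 1 := by omega
      have := hstep (r + d + 1) h2
      simp only [Nat.add_sub_cancel] at this
      calc H r = contract (z ^ d) (H (r + d)) := ih r hr
        _ = contract (z ^ d) (contract z (H (r + d + 1))) := by rw [this]
        _ = contract (z ^ d * z) (H (r + (d + 1))) := by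
            rw [← mul_contract]; ring_nf
        _ = contract (z ^ (d + 1)) (H (r + (d + 1))) := by rw [← pow_succ]
  intro G hGmem
  rw [hspan] at hGmem
  induction hGmem using Submodule.span_induction with
  | mem x hx =>
    obtain ⟨l, hl, rfl⟩ := hx
    exact ⟨l, hl, 1, (one_contract _).symm⟩
  | zero => exact ⟨1, le_rfl, 0, (zero_contract _).symm⟩
  | add x y _ _ hx hy =>
    obtain ⟨r1, hr1, F1, rfl⟩ := hx
    obtain ⟨r2, hr2, F2, rfl⟩ := hy
    refine ⟨max r1 r2, le_trans hr1 (le_max_left _ _),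
      F1 * z ^ (max r1 r2 - r1) + F2 * z ^ (max r1 r2 - r2), ?_⟩
    have e1 : H r1 = contract (z ^ (max r1 r2 - r1)) (H (max r1 r2)) := by
      have := key (max r1 r2 - r1) r1 hr1
      rwa [Nat.add_sub_cancel' (le_max_left _ _)] at this
    have e2 : H r2 = contract (z ^ (max r1 r2 - r2)) (H (max r1 r2)) := by
      have := key (max r1 r2 - r2) r2 hr2
      rwa [Nat.add_sub_cancel' (le_max_right _ _)] at this
    rw [add_contract, mul_contract, mul_contract, ← e1, ← e2]
  | smul c x _ hx =>
    obtain ⟨r, hr, F, rfl⟩ := hx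
    exact ⟨r, hr, c * F, by rw [smul_def, mul_contract]⟩
end

section
/- Let I be an ideal of R such that A = R/I has Krull dimension 1 and such that I^⊥ = ⟨H_t : t ≥ 1⟩ where {H_t}_{t≥1} is a G-admissible system of generators with respect to a linear form z ∈ R (this holds precisely when A is one-dimensional Gorenstein). Then I is a prime ideal if and only if for every a ∈ R \ I and every t ≥ 1 there exist F ∈ R and an integer r ≥ t such that H_t = a ∘ (F ∘ H_r). -/
/- Context: R = k[[x_1,…,x_n]] acting on Γ = k[y_1,…,y_n] by contraction:
`x^α ∘ y^β = y^{β-α}` if `α ≤ β` componentwise and `0` otherwise, extended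
`k`-linearly. -/

open MvPolynomial

variable {n : ℕ} {k : Type} [Field k]

/-- for `I` with `dim R/I = 1` and `I^⊥ = ⟨H_t : t ≥ 1⟩`
G-admissible with respect to a linear form `z`, the ideal `I` is prime iff for
every `a ∈ R \ I` and every `t ≥ 1` there are `F ∈ R` and `r ≥ t` with
`H_t = a ∘ (F ∘ H_r)`. -/
theorem isPrime_iff_contract_condition {n : ℕ} {k : Type} [Field k] (hn : 1 ≤ n)
    (I : Ideal (MvPowerSeries (Fin n) k))
    (hdim : ringKrullDim (MvPowerSeries (Fin n) k ⧸ I) = 1)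
    (z : MvPowerSeries (Fin n) k) (H : ℕ → MvPolynomial (Fin n) k)
    (hG : IsGAdmissibleSystem z H (perp I)) :
    I.IsPrime ↔ ∀ a : MvPowerSeries (Fin n) k, a ∉ I → ∀ t : ℕ, 1 ≤ t →
      ∃ (F : MvPowerSeries (Fin n) k) (r : ℕ), t ≤ r ∧
        H t = contract a (contract F (H r)) := by
  
  classical
  obtain ⟨hlin, hspan, hz, hz1, hadm⟩ := hG
  -- `I` is a proper ideal
  have hIne : I ≠ ⊤ := by
    intro h
    haveI : Subsingleton (MvPowerSeries (Fin n) k ⧸ I) :=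
      Ideal.Quotient.subsingleton_iff.mpr h
    rw [ringKrullDim_eq_bot_of_subsingleton] at hdim
    exact absurd hdim (by simp)
  -- elements of `I` have zero constant coefficient
  have hIcc : ∀ g ∈ I, MvPowerSeries.constantCoeff g = 0 := by
    intro g hg
    by_contra h0
    exact hIne (Ideal.eq_top_of_isUnit_mem I hg
      (MvPowerSeries.isUnit_iff_constantCoeff.mpr (isUnit_iff_ne_zero.mpr h0)))
  have hHperp : ∀ l : ℕ, 1 ≤ l → H l ∈ perp I := by
    intro l hl
    rw [hspan]
    exact Submodule.subset_span ⟨l, hl, rfl⟩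
  have hchain : ∀ c : ℕ, ∀ t : ℕ, 1 ≤ t → contract (z ^ c) (H (t + c)) = H t := by
    intro c
    induction c with
    | zero =>
      intro t ht
      rw [pow_zero]
      exact one_contract _
    | succ c ih =>
      intro t ht
      have h2 : contract z (H (t + c + 1)) = H (t + c) := by
        have h3 := hz (t + c + 1) (by omega)
        rwa [Nat.add_sub_cancel] at h3
      have h4 : t + (c + 1) = t + c + 1 := by omega
      rw [h4, pow_succ, mul_contract, h2]
      exact ih t ht
  have honeperp : (1 : MvPolynomial (Fin n) k) ∈ perp I := by
    refine mem_perp_iff.mpr fun g hg => ?_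
    have hcc : MvPowerSeries.coeff (0 : Fin n →₀ ℕ) g = 0 := by
      rw [MvPowerSeries.coeff_zero_eq_constantCoeff]
      exact hIcc g hg
    have hsupp : (1 : MvPolynomial (Fin n) k).support ⊆ {0} := by
      intro γ hγ
      rw [MvPolynomial.mem_support_iff] at hγ
      rw [Finset.mem_singleton]
      by_contra hne
      exact hγ (by rw [MvPolynomial.coeff_one, if_neg (fun h => hne h.symm)])
    apply MvPolynomial.ext
    intro β
    rw [coeff_contract g 1 hsupp β, MvPolynomial.coeff_zero, Finset.sum_singleton]
    by_cases hβ : β ≤ (0 : Fin n →₀ ℕ)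
    · have hβ0 : β = 0 := le_antisymm hβ zero_le
      subst hβ0
      rw [if_pos le_rfl, tsub_self, hcc, zero_mul]
    · rw [if_neg hβ]
  constructor
  · -- forward direction
    intro hI a ha t ht
    haveI := hI
    haveI : Nontrivial (MvPowerSeries (Fin n) k ⧸ I) := Ideal.Quotient.nontrivial_iff.mpr hIne
    haveI : IsLocalRing (MvPowerSeries (Fin n) k ⧸ I) :=
      IsLocalRing.of_surjective' (Ideal.Quotient.mk I) Ideal.Quotient.mk_surjective
    have hb : Ideal.Quotient.mk I a ≠ 0 := fun h => ha (Ideal.Quotient.eq_zero_iff_mem.mp h)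
    have hzcc : MvPowerSeries.constantCoeff z = 0 := by
      obtain ⟨c, rfl⟩ := hlin
      rw [← MvPowerSeries.coeff_zero_eq_constantCoeff_apply, map_sum]
      refine Finset.sum_eq_zero fun i _ => ?_
      rw [map_smul, MvPowerSeries.coeff_zero_X, smul_zero]
    have hζ : Ideal.Quotient.mk I z ∈
        IsLocalRing.maximalIdeal (MvPowerSeries (Fin n) k ⧸ I) := by
      rw [IsLocalRing.mem_maximalIdeal, mem_nonunits_iff]
      intro hu
      obtain ⟨w, hw⟩ := isUnit_iff_exists_inv.mp hu
      obtain ⟨w', rfl⟩ := Ideal.Quotient.mk_surjective w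
      have hmem : z * w' - 1 ∈ I := Ideal.Quotient.eq.mp (by rw [map_mul, map_one, hw])
      have hcc := hIcc _ hmem
      rw [map_sub, map_mul, hzcc, zero_mul, map_one, zero_sub, neg_eq_zero] at hcc
      exact one_ne_zero hcc
    have hrad : Ideal.Quotient.mk I z ∈ (Ideal.span {Ideal.Quotient.mk I a}).radical := by
      rw [Ideal.radical_eq_sInf]
      refine Submodule.mem_sInf.mpr ?_
      rintro J ⟨hJle, hJprime⟩
      by_contra hzJ
      have hJm : J < IsLocalRing.maximalIdeal (MvPowerSeries (Fin n) k ⧸ I) :=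
        lt_of_le_of_ne (IsLocalRing.le_maximalIdeal hJprime.ne_top)
          (fun h => hzJ (h ▸ hζ))
      have hbotJ : (⊥ : Ideal (MvPowerSeries (Fin n) k ⧸ I)) < J := by
        refine lt_of_le_of_ne bot_le fun h => ?_
        have : Ideal.Quotient.mk I a ∈ J := hJle (Ideal.subset_span rfl)
        rw [← h] at this
        exact hb (Submodule.mem_bot _ |>.mp this)
      let p0 : PrimeSpectrum (MvPowerSeries (Fin n) k ⧸ I) := ⟨⊥, Ideal.bot_prime⟩
      let p1 : PrimeSpectrum (MvPowerSeries (Fin n) k ⧸ I) := ⟨J, hJprime⟩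
      let p2 : PrimeSpectrum (MvPowerSeries (Fin n) k ⧸ I) :=
        ⟨IsLocalRing.maximalIdeal _, (IsLocalRing.maximalIdeal.isMaximal _).isPrime⟩
      have h01 : p0 < p1 := (PrimeSpectrum.asIdeal_lt_asIdeal _ _).mp hbotJ
      have h12 : p1 < p2 := (PrimeSpectrum.asIdeal_lt_asIdeal _ _).mp hJm
      let ch : LTSeries (PrimeSpectrum (MvPowerSeries (Fin n) k ⧸ I)) :=
        ((RelSeries.singleton _ p2).cons p1 h12).cons p0 (by exact h01)
      have hlen := Order.LTSeries.length_le_krullDim ch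
      have hlen2 : ch.length = 2 := rfl
      have hdim' : Order.krullDim (PrimeSpectrum (MvPowerSeries (Fin n) k ⧸ I)) = 1 := hdim
      rw [hlen2, hdim'] at hlen
      norm_num at hlen
    obtain ⟨m, hm⟩ := hrad
    obtain ⟨u, hu⟩ := Ideal.mem_span_singleton'.mp hm
    obtain ⟨F, rfl⟩ := Ideal.Quotient.mk_surjective u
    have hmem : z ^ m - F * a ∈ I :=
      Ideal.Quotient.eq.mp (by rw [map_pow, map_mul, hu])
    refine ⟨F, t + m, Nat.le_add_right t m, ?_⟩
    have hsub : contract (z ^ m - F * a) (H (t + m)) = 0 :=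
      mem_perp_iff.mp (hHperp (t + m) (by omega)) _ hmem
    have hFa : F * a + (z ^ m - F * a) = z ^ m := by ring
    calc H t = contract (z ^ m) (H (t + m)) := (hchain m t ht).symm
      _ = contract (F * a) (H (t + m)) + contract (z ^ m - F * a) (H (t + m)) := by
          rw [← add_contract, hFa]
      _ = contract (F * a) (H (t + m)) := by rw [hsub, add_zero]
      _ = contract (a * F) (H (t + m)) := by rw [mul_comm F a]
      _ = contract a (contract F (H (t + m))) := mul_contract _ _ _
  · -- backward direction
    intro hcond
    refine ⟨hIne, fun {x y} hxy => ?_⟩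
    by_contra hcon
    push_neg at hcon
    obtain ⟨hx, hy⟩ := hcon
    have hy0 : ∀ s : ℕ, 1 ≤ s → contract x (H s) = 0 := by
      intro s hs
      obtain ⟨F, r, hr, hEq⟩ := hcond y hy s hs
      calc contract x (H s) = contract x (contract y (contract F (H r))) := by rw [hEq]
        _ = contract (x * y) (contract F (H r)) := (mul_contract _ _ _).symm
        _ = contract ((x * y) * F) (H r) := (mul_contract _ _ _).symm
        _ = contract (F * (x * y)) (H r) := by rw [mul_comm]
        _ = contract F (contract (x * y) (H r)) := mul_contract _ _ _
        _ = 0 := by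
            rw [mem_perp_iff.mp (hHperp r (le_trans hs hr)) _ hxy, contract_zero]
    have hall0 : ∀ s : ℕ, 1 ≤ s → H s = 0 := by
      intro s hs
      obtain ⟨F, r, hr, hEq⟩ := hcond x hx s hs
      calc H s = contract x (contract F (H r)) := hEq
        _ = contract (x * F) (H r) := (mul_contract _ _ _).symm
        _ = contract (F * x) (H r) := by rw [mul_comm]
        _ = contract F (contract x (H r)) := mul_contract _ _ _
        _ = 0 := by rw [hy0 r (le_trans hs hr), contract_zero]
    have hbot : perp I = ⊥ := by
      rw [hspan, Submodule.span_eq_bot]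
      rintro F ⟨l, hl, rfl⟩
      exact hall0 l hl
    rw [hbot] at honeperp
    exact one_ne_zero (Submodule.mem_bot _ |>.mp honeperp)
end

section
/- For any two ideals I, J of R, the inverse system of their intersection is the sum of their inverse systems: (I ∩ J)^⊥ = I^⊥ + J^⊥ as R-submodules of Γ. -/
/- Context: R = k[[x_1,…,x_n]] acting on Γ = k[y_1,…,y_n] by contraction:
`x^α ∘ y^β = y^{β-α}` if `α ≤ β` componentwise and `0` otherwise, extended
`k`-linearly. -/

open MvPolynomial

variable {n : ℕ} {k : Type} [Field k]

namespace MacaulayAux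
variable {n : ℕ} {k : Type} [Field k]




/-- Total degree of a multi-exponent. -/
def deg (γ : Fin n →₀ ℕ) : ℕ := γ.sum fun _ e => e

lemma deg_add (γ δ : Fin n →₀ ℕ) : deg (γ + δ) = deg γ + deg δ :=
  Finsupp.sum_add_index' (fun _ => rfl) (fun _ _ _ => rfl)

lemma deg_mono {γ δ : Fin n →₀ ℕ} (h : γ ≤ δ) : deg γ ≤ deg δ := by
  have : δ = γ + (δ - γ) := (add_tsub_cancel_of_le h).symm
  rw [this, deg_add]; exact Nat.le_add_right _ _

lemma apply_le_deg (γ : Fin n →₀ ℕ) (i : Fin n) : γ i ≤ deg γ := by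
  by_cases h : i ∈ γ.support
  · exact Finset.single_le_sum (fun _ _ => Nat.zero_le _) h
  · simp [Finsupp.notMem_support_iff.mp h]

/-- The subspace of power series whose coefficients vanish in all degrees `≤ d`. -/
def Fdeg (n : ℕ) (k : Type) [Field k] (d : ℕ) : Submodule k (MvPowerSeries (Fin n) k) where
  carrier := {g | ∀ γ : Fin n →₀ ℕ, deg γ ≤ d → MvPowerSeries.coeff γ g = 0}
  add_mem' := fun {a b} ha hb γ hγ => by rw [map_add, ha γ hγ, hb γ hγ, add_zero]
  zero_mem' := fun γ _ => map_zero _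
  smul_mem' := fun c a ha γ hγ => by
    rw [MvPowerSeries.coeff_smul, ha γ hγ, mul_zero]

lemma mem_Fdeg_iff {d : ℕ} {g : MvPowerSeries (Fin n) k} :
    g ∈ Fdeg n k d ↔ ∀ γ : Fin n →₀ ℕ, deg γ ≤ d → MvPowerSeries.coeff γ g = 0 :=
  Iff.rfl

lemma Fdeg_antitone {d e : ℕ} (h : d ≤ e) : Fdeg n k e ≤ Fdeg n k d :=
  fun _ hg γ hγ => hg γ (hγ.trans h)

/-- Graded lex target. -/
abbrev GrL (n : ℕ) := Lex (ℕ × Lex (Fin n →₀ ℕ))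

/-- The graded-lex embedding. -/
def emb (γ : Fin n →₀ ℕ) : GrL n := toLex (deg γ, toLex γ)

lemma emb_inj : Function.Injective (emb (n := n)) := by
  intro a b h
  have := congrArg (fun x : GrL n => (ofLex x).2) h
  simpa [emb] using this

lemma emb_lt_iff {γ δ : Fin n →₀ ℕ} :
    emb γ < emb δ ↔ deg γ < deg δ ∨ (deg γ = deg δ ∧ toLex γ < toLex δ) := by
  exact Prod.Lex.lt_iff

lemma deg_le_of_emb_le {γ δ : Fin n →₀ ℕ} (h : emb γ ≤ emb δ) : deg γ ≤ deg δ := by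
  rcases eq_or_lt_of_le h with h | h
  · exact le_of_eq (congrArg deg (emb_inj h))
  · rcases emb_lt_iff.mp h with h | ⟨h, _⟩
    · exact h.le
    · exact h.le

lemma emb_lt_of_deg_lt {γ δ : Fin n →₀ ℕ} (h : deg γ < deg δ) : emb γ < emb δ :=
  emb_lt_iff.mpr (Or.inl h)

lemma toLex_add_lt_add_iff {τ γ δ : Fin n →₀ ℕ} :
    toLex (τ + γ) < toLex (τ + δ) ↔ toLex γ < toLex δ := by
  rw [Finsupp.Lex.lt_iff, Finsupp.Lex.lt_iff]
  constructor
  · rintro ⟨i, h1, h2⟩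
    refine ⟨i, fun j hj => ?_, ?_⟩
    · have := h1 j hj
      simpa using this
    · simpa using h2
  · rintro ⟨i, h1, h2⟩
    refine ⟨i, fun j hj => ?_, ?_⟩
    · have := h1 j hj
      simpa using this
    · simpa using h2

lemma emb_add_lt_add_iff {τ γ δ : Fin n →₀ ℕ} :
    emb (τ + γ) < emb (τ + δ) ↔ emb γ < emb δ := by
  rw [emb_lt_iff, emb_lt_iff, deg_add, deg_add]
  simp only [Nat.add_lt_add_iff_left, Nat.add_right_cancel_iff, Nat.add_left_cancel_iff]
  exact or_congr Iff.rfl (and_congr Iff.rfl toLex_add_lt_add_iff)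


noncomputable section


lemma exists_coeff_ne_zero {f : MvPowerSeries (Fin n) k} (hf : f ≠ 0) :
    ∃ γ, MvPowerSeries.coeff γ f ≠ 0 := by
  by_contra h
  push_neg at h
  exact hf (MvPowerSeries.ext fun γ => by rw [h γ, map_zero])

lemma exists_lead (f : MvPowerSeries (Fin n) k) (hf : f ≠ 0) :
    ∃ γ, MvPowerSeries.coeff γ f ≠ 0 ∧
      ∀ δ, emb δ < emb γ → MvPowerSeries.coeff δ f = 0 := by
  have h := exists_coeff_ne_zero hf
  have hne : (emb '' {γ | MvPowerSeries.coeff γ f ≠ 0}).Nonempty :=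
    ⟨emb h.choose, Set.mem_image_of_mem _ h.choose_spec⟩
  have hmem := (wellFounded_lt (α := GrL n)).min_mem _ hne
  obtain ⟨γ, hγ, hγeq⟩ := hmem
  refine ⟨γ, hγ, fun δ hδ => ?_⟩
  by_contra hc
  rw [hγeq] at hδ
  exact WellFounded.not_lt_min _ _ (Set.mem_image_of_mem emb hc) hδ

/-- Leading (grlex-smallest) exponent of a nonzero power series; junk value 0 at 0. -/
def lexp (f : MvPowerSeries (Fin n) k) : Fin n →₀ ℕ := by
  classical
  exact if h : f ≠ 0 then (exists_lead f h).choose else 0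

lemma coeff_lexp_ne_zero {f : MvPowerSeries (Fin n) k} (hf : f ≠ 0) :
    MvPowerSeries.coeff (lexp f) f ≠ 0 := by
  rw [lexp, dif_pos hf]
  exact (exists_lead f hf).choose_spec.1

lemma coeff_eq_zero_of_emb_lt_lexp {f : MvPowerSeries (Fin n) k} (hf : f ≠ 0)
    {δ : Fin n →₀ ℕ} (h : emb δ < emb (lexp f)) : MvPowerSeries.coeff δ f = 0 := by
  rw [lexp, dif_pos hf] at h
  exact (exists_lead f hf).choose_spec.2 δ h

lemma lexp_eq_of {f : MvPowerSeries (Fin n) k} (hf : f ≠ 0) {γ : Fin n →₀ ℕ}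
    (h1 : MvPowerSeries.coeff γ f ≠ 0)
    (h2 : ∀ δ, emb δ < emb γ → MvPowerSeries.coeff δ f = 0) : lexp f = γ := by
  apply emb_inj
  rcases lt_trichotomy (emb (lexp f)) (emb γ) with h | h | h
  · exact absurd (coeff_lexp_ne_zero hf) (not_not_intro (h2 _ h))
  · exact h
  · exact absurd h1 (not_not_intro (coeff_eq_zero_of_emb_lt_lexp hf h))

end

/-- Dickson's lemma via Noetherianity of the polynomial ring: any set of exponents has a
finite subset that is cofinal downwards. -/
lemma dickson (k : Type) [Field k] (E : Set (Fin n →₀ ℕ)) :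
    ∃ T : Finset (Fin n →₀ ℕ), ↑T ⊆ E ∧ ∀ γ ∈ E, ∃ δ ∈ T, δ ≤ γ := by
  classical
  set S : Set (MvPolynomial (Fin n) k) :=
    (fun γ => MvPolynomial.monomial γ (1 : k)) '' E with hS
  -- the ideal generated by the monomials is finitely generated
  have hfg : (Ideal.span S).FG := IsNoetherian.noetherian _
  obtain ⟨T', hT'⟩ := hfg
  -- each generator lies in the span of finitely many elements of S
  have hmem : ∀ t ∈ T', ∃ (U : Finset (MvPolynomial (Fin n) k)),
      ↑U ⊆ S ∧ t ∈ Ideal.span (U : Set (MvPolynomial (Fin n) k)) := by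
    intro t ht
    have : t ∈ Ideal.span S := by
      rw [← hT']; exact Ideal.subset_span ht
    obtain ⟨U, hU1, hU2⟩ := Submodule.mem_span_finite_of_mem_span this
    exact ⟨U, hU1, hU2⟩
  choose U hU1 hU2 using hmem
  set V : Finset (MvPolynomial (Fin n) k) := T'.attach.biUnion (fun t => U t t.2) with hV
  have hVS : ↑V ⊆ S := by
    intro v hv
    simp only [hV, Finset.coe_biUnion, Set.mem_iUnion, Finset.mem_coe] at hv
    obtain ⟨t, ht, hvt⟩ := hv
    exact hU1 t.1 t.2 hvt
  have hspan : Ideal.span S ≤ Ideal.span (V : Set (MvPolynomial (Fin n) k)) := by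
    rw [← hT', Ideal.span_le]
    intro t ht
    refine Submodule.span_mono ?_ (hU2 t ht)
    intro v hv
    simp only [hV, Finset.coe_biUnion, Set.mem_iUnion, Finset.mem_coe]
    exact ⟨⟨t, ht⟩, Finset.mem_attach _ _, hv⟩
  -- extract the exponents of V
  have hVexp : ∀ v ∈ V, ∃ δ ∈ E, MvPolynomial.monomial δ (1 : k) = v := fun v hv => hVS hv
  choose expo hexpo1 hexpo2 using hVexp
  refine ⟨V.attach.image (fun v => expo v.1 v.2), ?_, ?_⟩
  · intro δ hδ
    simp only [Finset.coe_image, Set.mem_image, Finset.mem_coe, Finset.mem_attach] at hδ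
    obtain ⟨v, _, hv⟩ := hδ
    exact hv ▸ hexpo1 v.1 v.2
  · intro γ hγ
    have : (MvPolynomial.monomial γ (1 : k)) ∈ Ideal.span (V : Set (MvPolynomial (Fin n) k)) :=
      hspan (Ideal.subset_span (Set.mem_image_of_mem _ hγ))
    rw [Ideal.span] at this
    rw [Submodule.mem_span_finset] at this
    obtain ⟨c, -, hc⟩ := this
    by_contra hno
    push_neg at hno
    have h1 : MvPolynomial.coeff γ (MvPolynomial.monomial γ (1 : k)) = 1 := by
      simp [MvPolynomial.coeff_monomial]
    rw [← hc, MvPolynomial.coeff_sum] at h1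
    have h0 : ∀ v ∈ V, MvPolynomial.coeff γ (c v • v) = 0 := by
      intro v hv
      have hrep := hexpo2 v hv
      have hne : ¬ expo v hv ≤ γ := by
        intro hle
        exact (hno (expo v hv) (Finset.mem_image.mpr
          ⟨⟨v, hv⟩, Finset.mem_attach _ _, rfl⟩)) hle
      rw [smul_eq_mul, ← hrep, MvPolynomial.coeff_mul_monomial', if_neg hne]
    rw [Finset.sum_congr rfl h0, Finset.sum_const_zero] at h1
    exact one_ne_zero h1.symm


noncomputable section Division

variable (I : Ideal (MvPowerSeries (Fin n) k))

/-- The closure of an ideal: elements approximable by ideal elements in every degree. -/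
def Cl : Submodule k (MvPowerSeries (Fin n) k) :=
  ⨅ d : ℕ, (Submodule.restrictScalars k (I : Submodule (MvPowerSeries (Fin n) k)
    (MvPowerSeries (Fin n) k)) ⊔ Fdeg n k d)

variable {I}

lemma mem_Cl_iff {f : MvPowerSeries (Fin n) k} :
    f ∈ Cl I ↔ ∀ d : ℕ, f ∈ (Submodule.restrictScalars k (I : Submodule (MvPowerSeries (Fin n) k)
      (MvPowerSeries (Fin n) k)) ⊔ Fdeg n k d) := by
  simp [Cl, Submodule.mem_iInf]

lemma ideal_le_Cl : Submodule.restrictScalars k (I : Submodule (MvPowerSeries (Fin n) k)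
    (MvPowerSeries (Fin n) k)) ≤ Cl I :=
  le_iInf fun _ => le_sup_left

lemma mem_Cl_of_mem {f : MvPowerSeries (Fin n) k} (hf : f ∈ I) : f ∈ Cl I :=
  ideal_le_Cl hf

lemma exists_ideal_elt_same_lexp {f : MvPowerSeries (Fin n) k} (hf : f ≠ 0)
    (hCl : f ∈ Cl I) : ∃ g, g ∈ I ∧ g ≠ 0 ∧ lexp g = lexp f := by
  have h := mem_Cl_iff.mp hCl (deg (lexp f))
  rw [Submodule.mem_sup] at h
  obtain ⟨i, hi, r, hr, hir⟩ := h
  have hcoeff : ∀ δ, emb δ ≤ emb (lexp f) → MvPowerSeries.coeff δ r = 0 := fun δ hδ =>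
    hr δ (deg_le_of_emb_le hδ)
  have hif : MvPowerSeries.coeff (lexp f) i = MvPowerSeries.coeff (lexp f) f := by
    have h3 := congrArg (MvPowerSeries.coeff (lexp f)) hir
    rw [map_add, hcoeff _ le_rfl, add_zero] at h3
    exact h3
  have hine : i ≠ 0 := by
    intro h0
    rw [h0, map_zero] at hif
    exact coeff_lexp_ne_zero hf hif.symm
  refine ⟨i, hi, hine, lexp_eq_of hine (hif ▸ coeff_lexp_ne_zero hf) fun δ hδ => ?_⟩
  have : MvPowerSeries.coeff δ f = 0 := coeff_eq_zero_of_emb_lt_lexp hf hδ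
  have h2 := hcoeff δ hδ.le
  have := congrArg (MvPowerSeries.coeff δ) hir
  rw [map_add, h2, add_zero] at this
  rw [this]
  exact coeff_eq_zero_of_emb_lt_lexp hf hδ

/-- Division data: a finite set of leading exponents of ideal elements, downward-cofinal
among all leading exponents of elements of the closure. -/
structure DivData (I : Ideal (MvPowerSeries (Fin n) k)) where
  T : Finset (Fin n →₀ ℕ)
  gw : (Fin n →₀ ℕ) → MvPowerSeries (Fin n) k
  hgI : ∀ δ ∈ T, gw δ ∈ I
  hgne : ∀ δ ∈ T, gw δ ≠ 0
  hglexp : ∀ δ ∈ T, lexp (gw δ) = δ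
  hcof : ∀ f, f ≠ 0 → f ∈ Cl I → ∃ δ ∈ T, δ ≤ lexp f

lemma exists_divData (I : Ideal (MvPowerSeries (Fin n) k)) : Nonempty (DivData I) := by
  classical
  obtain ⟨T, hT1, hT2⟩ := dickson k {γ : Fin n →₀ ℕ | ∃ g, g ∈ I ∧ g ≠ 0 ∧ lexp g = γ}
  have hsel : ∀ δ ∈ T, ∃ g, g ∈ I ∧ g ≠ 0 ∧ lexp g = δ := fun δ hδ => hT1 hδ
  choose gsel hg1 hg2 hg3 using hsel
  refine ⟨⟨T, fun δ => if h : δ ∈ T then gsel δ h else 0, ?_, ?_, ?_, ?_⟩⟩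
  · intro δ hδ; simp only [dif_pos hδ]; exact hg1 δ hδ
  · intro δ hδ; simp only [dif_pos hδ]; exact hg2 δ hδ
  · intro δ hδ; simp only [dif_pos hδ]; exact hg3 δ hδ
  · intro f hf hCl
    obtain ⟨g, hgI', hgne', hlexp'⟩ := exists_ideal_elt_same_lexp hf hCl
    obtain ⟨δ, hδT, hδle⟩ := hT2 (lexp f) ⟨g, hgI', hgne', hlexp'⟩
    exact ⟨δ, hδT, hδle⟩

variable (D : DivData I)

/-- One division step. -/
def dstep (st : MvPowerSeries (Fin n) k × ((Fin n →₀ ℕ) → MvPowerSeries (Fin n) k)) :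
    MvPowerSeries (Fin n) k × ((Fin n →₀ ℕ) → MvPowerSeries (Fin n) k) := by
  classical
  exact if hf : st.1 = 0 then st
  else if hδ : ∃ δ ∈ D.T, δ ≤ lexp st.1 then
    letI δ := hδ.choose
    letI γ := lexp st.1 - δ
    letI c := MvPowerSeries.coeff (lexp st.1) st.1 / MvPowerSeries.coeff δ (D.gw δ)
    (st.1 - MvPowerSeries.monomial γ c * D.gw δ,
      Function.update st.2 δ (st.2 δ + MvPowerSeries.monomial γ c))
  else st

/-- The division iteration. -/
def dseq (f₀ : MvPowerSeries (Fin n) k) (m : ℕ) :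
    MvPowerSeries (Fin n) k × ((Fin n →₀ ℕ) → MvPowerSeries (Fin n) k) :=
  (dstep D)^[m] (f₀, fun _ => 0)

lemma dseq_succ (f₀ : MvPowerSeries (Fin n) k) (m : ℕ) :
    dseq D f₀ (m + 1) = dstep D (dseq D f₀ m) :=
  Function.iterate_succ_apply' _ _ _

lemma dstep_spec (st : MvPowerSeries (Fin n) k × ((Fin n →₀ ℕ) → MvPowerSeries (Fin n) k))
    (hf : st.1 ≠ 0) (hCl : st.1 ∈ Cl I) :
    ∃ δ ∈ D.T, ∃ γ : Fin n →₀ ℕ, ∃ c : k,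
      γ + δ = lexp st.1 ∧
      (dstep D st).1 = st.1 - MvPowerSeries.monomial γ c * D.gw δ ∧
      (dstep D st).2 = Function.update st.2 δ (st.2 δ + MvPowerSeries.monomial γ c) ∧
      (∀ α, emb α ≤ emb (lexp st.1) → MvPowerSeries.coeff α (dstep D st).1 = 0) := by
  classical
  have hδ : ∃ δ ∈ D.T, δ ≤ lexp st.1 := D.hcof st.1 hf hCl
  set δ := hδ.choose with hδdef
  have hδspec := hδ.choose_spec
  have hδT : δ ∈ D.T := hδspec.1
  have hδle : δ ≤ lexp st.1 := hδspec.2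
  set γ := lexp st.1 - δ with hγdef
  set c := MvPowerSeries.coeff (lexp st.1) st.1 / MvPowerSeries.coeff δ (D.gw δ) with hcdef
  have hstep : dstep D st = (st.1 - MvPowerSeries.monomial γ c * D.gw δ,
      Function.update st.2 δ (st.2 δ + MvPowerSeries.monomial γ c)) := by
    rw [dstep, dif_neg hf, dif_pos hδ]
  have hγδ : γ + δ = lexp st.1 := tsub_add_cancel_of_le hδle
  refine ⟨δ, hδT, γ, c, hγδ, by rw [hstep], by rw [hstep], ?_⟩
  intro α hα
  rw [hstep]
  simp only [map_sub]
  rw [MvPowerSeries.coeff_monomial_mul]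
  rcases eq_or_lt_of_le hα with heq | hlt
  · have hαeq : α = lexp st.1 := emb_inj heq
    have hγα : γ ≤ α := by
      rw [hαeq, ← hγδ]; exact le_add_self.trans_eq (add_comm _ _) |>.trans_eq rfl
    rw [if_pos hγα]
    have : α - γ = δ := by
      rw [hαeq, ← hγδ, add_tsub_cancel_left]
    rw [this, hαeq]
    have hgδne : MvPowerSeries.coeff δ (D.gw δ) ≠ 0 := by
      have := coeff_lexp_ne_zero (D.hgne δ hδT)
      rwa [D.hglexp δ hδT] at this
    rw [hcdef, div_mul_cancel₀ _ hgδne, sub_self]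
  · have h1 : MvPowerSeries.coeff α st.1 = 0 := coeff_eq_zero_of_emb_lt_lexp hf hlt
    rw [h1]
    by_cases hγα : γ ≤ α
    · rw [if_pos hγα]
      have h2 : MvPowerSeries.coeff (α - γ) (D.gw δ) = 0 := by
        have hlt2 : emb (α - γ) < emb δ := by
          rw [← emb_add_lt_add_iff (τ := γ)]
          rw [add_tsub_cancel_of_le hγα, hγδ]
          exact hlt
        have := coeff_eq_zero_of_emb_lt_lexp (D.hgne δ hδT) (δ := α - γ)
        rw [D.hglexp δ hδT] at this
        exact this hlt2
      rw [h2, mul_zero, zero_sub, neg_zero]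
    · rw [if_neg hγα, zero_sub, neg_zero]


lemma dstep_of_zero (st : MvPowerSeries (Fin n) k × ((Fin n →₀ ℕ) → MvPowerSeries (Fin n) k))
    (hf : st.1 = 0) : dstep D st = st := by
  rw [dstep, dif_pos hf]

lemma dseq_fst_mem_Cl {f₀ : MvPowerSeries (Fin n) k} (hf₀ : f₀ ∈ Cl I) (m : ℕ) :
    (dseq D f₀ m).1 ∈ Cl I := by
  induction m with
  | zero => exact hf₀
  | succ m ih =>
    rw [dseq_succ]
    by_cases hf : (dseq D f₀ m).1 = 0
    · rw [dstep_of_zero D _ hf]; exact ih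
    · obtain ⟨δ, hδT, γ, c, _, h1, _, _⟩ := dstep_spec D _ hf ih
      rw [h1]
      exact Submodule.sub_mem _ ih (mem_Cl_of_mem (I.mul_mem_left _ (D.hgI δ hδT)))

lemma dseq_sum {f₀ : MvPowerSeries (Fin n) k} (hf₀ : f₀ ∈ Cl I) (m : ℕ) :
    f₀ = (dseq D f₀ m).1 + ∑ δ ∈ D.T, (dseq D f₀ m).2 δ * D.gw δ := by
  classical
  induction m with
  | zero =>
    simp [dseq]
  | succ m ih =>
    rw [dseq_succ]
    by_cases hf : (dseq D f₀ m).1 = 0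
    · rw [dstep_of_zero D _ hf]; exact ih
    · obtain ⟨δ, hδT, γ, c, _, h1, h2, _⟩ := dstep_spec D _ hf (dseq_fst_mem_Cl D hf₀ m)
      rw [h1, h2]
      have hupd : ∀ δ' ∈ D.T,
          Function.update (dseq D f₀ m).2 δ ((dseq D f₀ m).2 δ + MvPowerSeries.monomial γ c) δ'
            * D.gw δ' =
          Function.update (fun x => (dseq D f₀ m).2 x * D.gw x) δ
            (((dseq D f₀ m).2 δ + MvPowerSeries.monomial γ c) * D.gw δ) δ' := by
        intro δ' _
        by_cases h : δ' = δ
        · subst h; simp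
        · simp [Function.update_of_ne h]
      rw [Finset.sum_congr rfl hupd, Finset.sum_update_of_mem hδT]
      have hold : ∑ x ∈ D.T, (dseq D f₀ m).2 x * D.gw x
          = (dseq D f₀ m).2 δ * D.gw δ + ∑ x ∈ D.T \ {δ}, (dseq D f₀ m).2 x * D.gw x := by
        rw [← Finset.erase_eq, ← Finset.add_sum_erase _ _ hδT]
      conv_lhs => rw [ih, hold]
      ring

lemma dseq_stable_of_zero {f₀ : MvPowerSeries (Fin n) k} {m : ℕ}
    (hf : (dseq D f₀ m).1 = 0) {m' : ℕ} (hm : m ≤ m') : dseq D f₀ m' = dseq D f₀ m := by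
  induction m', hm using Nat.le_induction with
  | base => rfl
  | succ m' hm ih =>
    rw [dseq_succ, ih, dstep_of_zero D _ hf]

lemma dseq_ne_zero_of_succ {f₀ : MvPowerSeries (Fin n) k} {m : ℕ}
    (h : (dseq D f₀ (m + 1)).1 ≠ 0) : (dseq D f₀ m).1 ≠ 0 := by
  intro h0
  exact h (by rw [dseq_stable_of_zero D h0 (Nat.le_succ m)]; exact h0)

lemma dseq_lexp_lt {f₀ : MvPowerSeries (Fin n) k} (hf₀ : f₀ ∈ Cl I) (m : ℕ)
    (h : (dseq D f₀ (m + 1)).1 ≠ 0) :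
    emb (lexp (dseq D f₀ m).1) < emb (lexp (dseq D f₀ (m + 1)).1) := by
  have hm := dseq_ne_zero_of_succ D h
  obtain ⟨δ, hδT, γ, c, _, _, _, h4⟩ := dstep_spec D _ hm (dseq_fst_mem_Cl D hf₀ m)
  by_contra hc
  push_neg at hc
  have := h4 (lexp (dseq D f₀ (m + 1)).1) hc
  rw [← dseq_succ] at this
  exact coeff_lexp_ne_zero h this

lemma dseq_lexp_le {f₀ : MvPowerSeries (Fin n) k} (hf₀ : f₀ ∈ Cl I) {m m' : ℕ} (hm : m ≤ m')
    (h : (dseq D f₀ m').1 ≠ 0) :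
    emb (lexp (dseq D f₀ m).1) ≤ emb (lexp (dseq D f₀ m').1) := by
  induction m', hm using Nat.le_induction with
  | base => exact le_rfl
  | succ m' hm ih =>
    exact (ih (dseq_ne_zero_of_succ D h)).trans (dseq_lexp_lt D hf₀ m' h).le

/-- Degree bound of the chosen generators. -/
def DTbound : ℕ := D.T.sup deg

lemma dseq_A_stable {f₀ : MvPowerSeries (Fin n) k} (hf₀ : f₀ ∈ Cl I) {m m' : ℕ} (hm : m ≤ m')
    (hne : (dseq D f₀ m).1 ≠ 0) {α : Fin n →₀ ℕ}
    (hα : deg α + DTbound D < deg (lexp (dseq D f₀ m).1)) (δ' : Fin n →₀ ℕ) :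
    MvPowerSeries.coeff α ((dseq D f₀ m').2 δ') =
      MvPowerSeries.coeff α ((dseq D f₀ m).2 δ') := by
  classical
  induction m', hm using Nat.le_induction with
  | base => rfl
  | succ m' hm ih =>
    rw [dseq_succ]
    by_cases hf : (dseq D f₀ m').1 = 0
    · rw [dstep_of_zero D _ hf]; exact ih
    · obtain ⟨δ, hδT, γ, c, hγδ, _, h3, _⟩ := dstep_spec D _ hf (dseq_fst_mem_Cl D hf₀ m')
      rw [h3]
      by_cases h : δ' = δ
      · subst h
        rw [Function.update_self, map_add]
        have hc : MvPowerSeries.coeff α (MvPowerSeries.monomial γ c) = 0 := by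
          rw [MvPowerSeries.coeff_monomial]
          have hdegs : deg γ + deg δ' = deg (lexp (dseq D f₀ m').1) := by
            rw [← deg_add, hγδ]
          have hmono := dseq_lexp_le D hf₀ hm hf
          have hd : deg α < deg γ := by
            have h5 : deg δ' ≤ DTbound D := Finset.le_sup (f := deg) hδT
            have h6 : deg (lexp (dseq D f₀ m).1) ≤ deg (lexp (dseq D f₀ m').1) :=
              deg_le_of_emb_le hmono
            omega
          rw [if_neg]
          intro hαγ
          rw [hαγ] at hd
          exact lt_irrefl _ hd
        rw [hc, add_zero]
        exact ih
      · rw [Function.update_of_ne h]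
        exact ih

lemma dseq_unbounded {f₀ : MvPowerSeries (Fin n) k} (hf₀ : f₀ ∈ Cl I)
    (hall : ∀ m, (dseq D f₀ m).1 ≠ 0) (Dg : ℕ) :
    ∃ m, Dg < deg (lexp (dseq D f₀ m).1) := by
  classical
  by_contra hc
  push_neg at hc
  have hstrict : StrictMono (fun m => emb (lexp (dseq D f₀ m).1)) :=
    strictMono_nat_of_lt_succ fun m => dseq_lexp_lt D hf₀ m (hall (m + 1))
  have hinj : Function.Injective (fun m => lexp (dseq D f₀ m).1) := by
    intro a b hab
    exact hstrict.injective (by simp only [] at hab ⊢; rw [hab])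
  set bd : Fin n →₀ ℕ := Finsupp.equivFunOnFinite.symm (fun _ => Dg) with hbd
  have hsub : Set.range (fun m => lexp (dseq D f₀ m).1) ⊆ ↑(Finset.Iic bd) := by
    rintro _ ⟨m, rfl⟩
    simp only [Finset.coe_Iic, Set.mem_Iic]
    intro i
    refine (apply_le_deg _ i).trans ?_
    simp only [hbd, Finsupp.coe_equivFunOnFinite_symm]
    exact hc m
  exact Set.infinite_range_of_injective hinj ((Finset.finite_toSet _).subset hsub)

/-- The division theorem: the closure of an ideal of the power series ring is itself. -/
theorem Cl_le_self (I : Ideal (MvPowerSeries (Fin n) k)) {f₀ : MvPowerSeries (Fin n) k}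
    (hf₀ : f₀ ∈ Cl I) : f₀ ∈ I := by
  classical
  obtain ⟨D⟩ := exists_divData I
  by_cases hex : ∃ m, (dseq D f₀ m).1 = 0
  · obtain ⟨m, hm⟩ := hex
    have := dseq_sum D hf₀ m
    rw [hm, zero_add] at this
    rw [this]
    exact Ideal.sum_mem I fun δ hδ => I.mul_mem_left _ (D.hgI δ hδ)
  · push_neg at hex
    -- stage at which all coefficients of degree ≤ deg α have stabilized
    have hM : ∀ α : Fin n →₀ ℕ, ∃ m, deg α + DTbound D < deg (lexp (dseq D f₀ m).1) :=
      fun α => dseq_unbounded D hf₀ hex (deg α + DTbound D)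
    set M : (Fin n →₀ ℕ) → ℕ := fun α => (hM α).choose with hMdef
    have hMspec : ∀ α, deg α + DTbound D < deg (lexp (dseq D f₀ (M α)).1) :=
      fun α => (hM α).choose_spec
    set a : (Fin n →₀ ℕ) → MvPowerSeries (Fin n) k :=
      fun δ => fun α => MvPowerSeries.coeff α ((dseq D f₀ (M α)).2 δ) with hadef
    have hacoeff : ∀ δ α, MvPowerSeries.coeff α (a δ)
        = MvPowerSeries.coeff α ((dseq D f₀ (M α)).2 δ) := fun δ α => rfl
    have hstab : ∀ (m : ℕ) (α : Fin n →₀ ℕ),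
        deg α + DTbound D < deg (lexp (dseq D f₀ m).1) →
        ∀ δ, MvPowerSeries.coeff α (a δ) = MvPowerSeries.coeff α ((dseq D f₀ m).2 δ) := by
      intro m α hα δ
      rw [hacoeff]
      have h1 := dseq_A_stable D hf₀ (le_max_left (M α) m) (hex (M α)) (hMspec α) δ
      have h2 := dseq_A_stable D hf₀ (le_max_right (M α) m) (hex m) hα δ
      rw [← h1, h2]
    have hkey : f₀ = ∑ δ ∈ D.T, a δ * D.gw δ := by
      apply MvPowerSeries.ext
      intro α
      set m := M α with hm
      have hms : deg α + DTbound D < deg (lexp (dseq D f₀ m).1) := hMspec α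
      have hsum := dseq_sum D hf₀ m
      have hc0 : MvPowerSeries.coeff α (dseq D f₀ m).1 = 0 := by
        apply coeff_eq_zero_of_emb_lt_lexp (hex m)
        apply emb_lt_of_deg_lt
        omega
      have hterm : ∀ δ ∈ D.T, MvPowerSeries.coeff α (a δ * D.gw δ)
          = MvPowerSeries.coeff α ((dseq D f₀ m).2 δ * D.gw δ) := by
        intro δ _
        rw [MvPowerSeries.coeff_mul, MvPowerSeries.coeff_mul]
        apply Finset.sum_congr rfl
        rintro ⟨u, v⟩ huv
        rw [Finset.HasAntidiagonal.mem_antidiagonal] at huv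
        have hu : deg u ≤ deg α := by
          rw [← huv, deg_add]; exact Nat.le_add_right _ _
        have : deg u + DTbound D < deg (lexp (dseq D f₀ m).1) := by
          omega
        rw [hstab m u this δ]
      calc MvPowerSeries.coeff α f₀
          = MvPowerSeries.coeff α ((dseq D f₀ m).1 + ∑ δ ∈ D.T, (dseq D f₀ m).2 δ * D.gw δ) := by
            rw [← hsum]
        _ = ∑ δ ∈ D.T, MvPowerSeries.coeff α ((dseq D f₀ m).2 δ * D.gw δ) := by
            rw [map_add, hc0, zero_add, map_sum]
        _ = ∑ δ ∈ D.T, MvPowerSeries.coeff α (a δ * D.gw δ) := by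
            exact (Finset.sum_congr rfl hterm).symm
        _ = MvPowerSeries.coeff α (∑ δ ∈ D.T, a δ * D.gw δ) := by
            rw [map_sum]
    rw [hkey]
    exact Ideal.sum_mem I fun δ hδ => I.mul_mem_left _ (D.hgI δ hδ)


end Division


noncomputable section LinAlg

/-- Splitting a functional vanishing on an intersection into functionals vanishing on
each factor. -/
lemma split_functional {K V : Type*} [Field K] [AddCommGroup V] [Module K V]
    (A B : Submodule K V) (φ : V →ₗ[K] K) (h : A ⊓ B ≤ LinearMap.ker φ) :
    ∃ φ₁ φ₂ : V →ₗ[K] K, φ = φ₁ + φ₂ ∧ A ≤ LinearMap.ker φ₁ ∧ B ≤ LinearMap.ker φ₂ := by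
  classical
  obtain ⟨U₀, hU₀⟩ := Submodule.exists_isCompl (Submodule.comap B.subtype (A ⊓ B))
  set U : Submodule K V := U₀.map B.subtype with hU
  have hUB : U ≤ B := by
    rw [hU]
    rintro _ ⟨u, _, rfl⟩
    exact u.2
  have hABU : A ⊓ B ⊓ U = ⊥ := by
    rw [eq_bot_iff]
    rintro x ⟨hx1, hx2⟩
    obtain ⟨u, hu, rfl⟩ := hx2
    have h1 : u ∈ Submodule.comap B.subtype (A ⊓ B) ⊓ U₀ := ⟨hx1, hu⟩
    rw [hU₀.inf_eq_bot, Submodule.mem_bot] at h1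
    rw [Submodule.mem_bot, h1]
    simp
  have hABsup : A ⊓ B ⊔ U = B := by
    apply le_antisymm
    · exact sup_le inf_le_right hUB
    · intro b hb
      have h2 : (⟨b, hb⟩ : B) ∈ Submodule.comap B.subtype (A ⊓ B) ⊔ U₀ := by
        rw [hU₀.sup_eq_top]; trivial
      obtain ⟨p, hp, u, hu, hpu⟩ := Submodule.mem_sup.mp h2
      have h3 : b = (p : V) + (u : V) := by
        have := congrArg (B.subtype) hpu
        simpa using this.symm
      rw [h3]
      exact Submodule.add_mem_sup (hp : (p : V) ∈ A ⊓ B) ⟨u, hu, rfl⟩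
  have hAU : A ⊓ U = ⊥ := by
    rw [eq_bot_iff]
    intro x hx
    have h4 : x ∈ A ⊓ B ⊓ U := ⟨⟨hx.1, hUB hx.2⟩, hx.2⟩
    rw [hABU] at h4
    exact h4
  have hAUB : A ⊔ U = A ⊔ B := by
    apply le_antisymm
    · exact sup_le le_sup_left (hUB.trans le_sup_right)
    · refine sup_le le_sup_left ?_
      rw [← hABsup]
      exact sup_le (inf_le_left.trans le_sup_left) le_sup_right
  obtain ⟨W, hW⟩ := Submodule.exists_isCompl (A ⊔ B)
  have hcompl : IsCompl A (U ⊔ W) := by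
    constructor
    · rw [disjoint_iff, eq_bot_iff]
      rintro x ⟨hxA, hxUW⟩
      obtain ⟨u, hu, w, hw, rfl⟩ := Submodule.mem_sup.mp hxUW
      have hwmem : w ∈ (A ⊔ B) ⊓ W := by
        refine ⟨?_, hw⟩
        have h5 : u + w - u = w := by rw [add_sub_cancel_left]
        rw [← h5]
        exact Submodule.sub_mem _ (Submodule.mem_sup_left hxA)
          (Submodule.mem_sup_right (hUB hu))
      rw [hW.inf_eq_bot] at hwmem
      rw [hwmem, add_zero] at hxA ⊢
      have h6 : u ∈ A ⊓ U := ⟨hxA, hu⟩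
      rw [hAU] at h6
      exact h6
    · rw [codisjoint_iff, ← sup_assoc, hAUB]
      exact codisjoint_iff.mp hW.codisjoint
  set φ₁ : V →ₗ[K] K := LinearMap.ofIsCompl hcompl 0 (φ.comp (U ⊔ W).subtype) with hφ₁
  have hφ₁A : ∀ x ∈ A, φ₁ x = 0 := by
    intro x hx
    have := LinearMap.ofIsCompl_left_apply hcompl (p := A) (q := U ⊔ W)
      (φ := (0 : A →ₗ[K] K)) (ψ := φ.comp (U ⊔ W).subtype) ⟨x, hx⟩
    simpa [hφ₁] using this
  have hφ₁UW : ∀ x ∈ U ⊔ W, φ₁ x = φ x := by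
    intro x hx
    have := LinearMap.ofIsCompl_right_apply hcompl (p := A) (q := U ⊔ W)
      (φ := (0 : A →ₗ[K] K)) (ψ := φ.comp (U ⊔ W).subtype) ⟨x, hx⟩
    simpa [hφ₁] using this
  refine ⟨φ₁, φ - φ₁, by abel, fun x hx => hφ₁A x hx, ?_⟩
  intro b hb
  rw [← hABsup] at hb
  obtain ⟨p, hp, u, hu, rfl⟩ := Submodule.mem_sup.mp hb
  have hφp : φ p = 0 := h hp
  have hφ₁p : φ₁ p = 0 := hφ₁A p hp.1
  have hφ₁u : φ₁ u = φ u := hφ₁UW u (Submodule.mem_sup_left hu)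
  simp only [LinearMap.mem_ker, LinearMap.sub_apply, map_add, hφp, hφ₁p, hφ₁u]
  ring

end LinAlg

noncomputable section FinDim

variable (n k)

/-- The finite set of exponents of degree at most `e`. -/
def Sd (e : ℕ) : Finset (Fin n →₀ ℕ) :=
  (Finset.Iic (Finsupp.equivFunOnFinite.symm (fun _ : Fin n => e))).filter (fun γ => deg γ ≤ e)

variable {n}

lemma mem_Sd_iff {e : ℕ} {γ : Fin n →₀ ℕ} : γ ∈ Sd n e ↔ deg γ ≤ e := by
  constructor
  · intro h
    exact (Finset.mem_filter.mp h).2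
  · intro h
    refine Finset.mem_filter.mpr ⟨Finset.mem_Iic.mpr ?_, h⟩
    intro i
    simp only [Finsupp.coe_equivFunOnFinite_symm]
    exact (apply_le_deg γ i).trans h

variable {k}

/-- A power series minus its truncation lies in `Fdeg`. -/
lemma sub_trunc_mem_Fdeg (e : ℕ) (g : MvPowerSeries (Fin n) k) :
    g - ∑ γ ∈ Sd n e, MvPowerSeries.monomial γ (MvPowerSeries.coeff γ g) ∈ Fdeg n k e := by
  classical
  intro β hβ
  rw [map_sub, map_sum]
  have : ∀ γ ∈ Sd n e, MvPowerSeries.coeff β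
      (MvPowerSeries.monomial γ (MvPowerSeries.coeff γ g))
      = if β = γ then MvPowerSeries.coeff γ g else 0 := fun γ _ =>
    MvPowerSeries.coeff_monomial _ _ _
  rw [Finset.sum_congr rfl this, Finset.sum_ite_eq (Sd n e) β
    (fun γ => MvPowerSeries.coeff γ g), if_pos (mem_Sd_iff.mpr hβ), sub_self]

set_option synthInstance.maxHeartbeats 1000000 in
/-- `R / Fdeg d` is finite dimensional. -/
lemma finiteDimensional_quotient (d : ℕ) :
    FiniteDimensional k (MvPowerSeries (Fin n) k ⧸ Fdeg n k d) := by
  classical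
  set f : MvPowerSeries (Fin n) k →ₗ[k] ({γ : Fin n →₀ ℕ // γ ∈ Sd n d} → k) :=
    LinearMap.pi (fun γ : {γ : Fin n →₀ ℕ // γ ∈ Sd n d} =>
      MvPowerSeries.coeff γ.1) with hf
  have hker : Fdeg n k d ≤ LinearMap.ker f := by
    intro g hg
    rw [LinearMap.mem_ker]
    funext γ
    exact hg γ.1 (mem_Sd_iff.mp γ.2)
  set flift := Submodule.liftQ (Fdeg n k d) f hker with hflift
  have hinj : Function.Injective flift := by
    rw [← LinearMap.ker_eq_bot, Submodule.ker_liftQ, eq_bot_iff]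
    rw [Submodule.map_le_iff_le_comap]
    intro g hg
    simp only [Submodule.mem_comap, Submodule.mem_bot, Submodule.mkQ_apply,
      Submodule.Quotient.mk_eq_zero]
    intro γ hγ
    have : f g = 0 := hg
    have := congrFun this ⟨γ, mem_Sd_iff.mpr hγ⟩
    simpa [hf] using this
  exact Module.Finite.of_injective flift hinj

set_option synthInstance.maxHeartbeats 1000000 in
/-- Antitone sequences of submodules stabilize modulo `Fdeg d`. -/
lemma stabilize (N : ℕ → Submodule k (MvPowerSeries (Fin n) k))
    (hN : ∀ {e e'}, e ≤ e' → N e' ≤ N e) (d : ℕ) :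
    ∃ s, d ≤ s ∧ ∀ e, s ≤ e → N e ⊔ Fdeg n k d = N s ⊔ Fdeg n k d := by
  classical
  haveI := finiteDimensional_quotient (k := k) (n := n) d
  set q : ℕ → Submodule k (MvPowerSeries (Fin n) k ⧸ Fdeg n k d) :=
    fun e => Submodule.map (Fdeg n k d).mkQ (N e) with hq
  set r : ℕ → ℕ := fun e => Module.finrank k (q e) with hr
  have hrmono : ∀ {e e'}, e ≤ e' → r e' ≤ r e := by
    intro e e' h
    exact Submodule.finrank_mono (Submodule.map_mono (hN h))
  have hnonempty : (Set.range r).Nonempty := ⟨r 0, 0, rfl⟩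
  obtain ⟨s₀, hs₀⟩ := Nat.sInf_mem hnonempty
  refine ⟨max s₀ d, le_max_right _ _, ?_⟩
  have hstable : ∀ e, max s₀ d ≤ e → q e = q (max s₀ d) := by
    intro e he
    have h1 : r e ≤ r (max s₀ d) := hrmono he
    have h2 : r (max s₀ d) ≤ r s₀ := hrmono (le_max_left _ _)
    have h3 : sInf (Set.range r) ≤ r e := Nat.sInf_le ⟨e, rfl⟩
    rw [← hs₀] at h3
    have heq : r e = r (max s₀ d) := le_antisymm h1 (by omega)
    exact Submodule.eq_of_le_of_finrank_eq (Submodule.map_mono (hN he)) heq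
  intro e he
  have := hstable e he
  have hcomap := congrArg (Submodule.comap (Fdeg n k d).mkQ) this
  rwa [Submodule.comap_map_eq, Submodule.comap_map_eq, Submodule.ker_mkQ] at hcomap

end FinDim


noncomputable section Chevalley

set_option synthInstance.maxHeartbeats 1000000 in
set_option maxHeartbeats 1000000 in
/-- The key uniformity lemma: a functional killing `I ∩ J` and all high degrees kills
`(I + F_e) ∩ (J + F_e)` for some `e`. -/
lemma chevalley (I J : Ideal (MvPowerSeries (Fin n) k))
    (φ : MvPowerSeries (Fin n) k →ₗ[k] k) (d : ℕ)
    (hd : Fdeg n k d ≤ LinearMap.ker φ)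
    (hIJ : ∀ g, g ∈ I → g ∈ J → φ g = 0) :
    ∃ e : ℕ, (Submodule.restrictScalars k (I : Submodule (MvPowerSeries (Fin n) k)
        (MvPowerSeries (Fin n) k)) ⊔ Fdeg n k e) ⊓
      (Submodule.restrictScalars k (J : Submodule (MvPowerSeries (Fin n) k)
        (MvPowerSeries (Fin n) k)) ⊔ Fdeg n k e) ≤ LinearMap.ker φ := by
  classical
  by_contra hcon
  push_neg at hcon
  set Ik := Submodule.restrictScalars k (I : Submodule (MvPowerSeries (Fin n) k)
    (MvPowerSeries (Fin n) k)) with hIk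
  set Jk := Submodule.restrictScalars k (J : Submodule (MvPowerSeries (Fin n) k)
    (MvPowerSeries (Fin n) k)) with hJk
  set N : ℕ → Submodule k (MvPowerSeries (Fin n) k) :=
    fun e => (Ik ⊔ Fdeg n k e) ⊓ (Jk ⊔ Fdeg n k e) with hNdef
  have hN : ∀ {e e'}, e ≤ e' → N e' ≤ N e := by
    intro e e' h
    exact inf_le_inf (sup_le_sup_left (Fdeg_antitone h) _) (sup_le_sup_left (Fdeg_antitone h) _)
  have hz : ∀ e, ∃ z ∈ N e, φ z ≠ 0 := by
    intro e
    obtain ⟨z, hz1, hz2⟩ := Set.not_subset.mp (hcon e)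
    exact ⟨z, hz1, hz2⟩
  -- stabilized subspaces
  have hstab : ∀ d' : ℕ, ∃ s, d' ≤ s ∧ ∀ e, s ≤ e → N e ⊔ Fdeg n k d' = N s ⊔ Fdeg n k d' :=
    fun d' => stabilize N hN d'
  choose s hs1 hs2 using hstab
  set T : ℕ → Submodule k (MvPowerSeries (Fin n) k) := fun d' => N (s d') ⊔ Fdeg n k d'
    with hTdef
  have hTe : ∀ d' e, s d' ≤ e → T d' = N e ⊔ Fdeg n k d' := by
    intro d' e he
    rw [hTdef]
    exact (hs2 d' e he).symm
  have hTmono : ∀ d', T (d' + 1) ≤ T d' := by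
    intro d'
    rw [hTe d' (max (s d') (s (d' + 1))) (le_max_left _ _),
      hTe (d' + 1) (max (s d') (s (d' + 1))) (le_max_right _ _)]
    exact sup_le_sup_left (Fdeg_antitone (Nat.le_succ d')) _
  have hTsur : ∀ d', T d' ≤ T (d' + 1) ⊔ Fdeg n k d' := by
    intro d'
    rw [hTe d' (max (s d') (s (d' + 1))) (le_max_left _ _),
      hTe (d' + 1) (max (s d') (s (d' + 1))) (le_max_right _ _)]
    rw [sup_assoc]
    exact sup_le_sup_left le_sup_right _
  have hTI : ∀ d', T d' ≤ Ik ⊔ Fdeg n k d' := by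
    intro d'
    rw [hTdef]
    refine sup_le ?_ le_sup_right
    refine inf_le_left.trans ?_
    refine sup_le le_sup_left (le_sup_of_le_right (Fdeg_antitone (hs1 d')))
  have hTJ : ∀ d', T d' ≤ Jk ⊔ Fdeg n k d' := by
    intro d'
    rw [hTdef]
    refine sup_le ?_ le_sup_right
    refine inf_le_right.trans ?_
    exact sup_le le_sup_left (le_sup_of_le_right (Fdeg_antitone (hs1 d')))
  -- starting element
  obtain ⟨z₀, hz₀N, hz₀φ⟩ := hz (s d)
  have hz₀T : z₀ ∈ T d := Submodule.mem_sup_left hz₀N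
  -- the recursive approximation sequence
  have hstep : ∀ m (x : MvPowerSeries (Fin n) k), x ∈ T (d + m) →
      ∃ y, y ∈ T (d + m + 1) ∧ x - y ∈ Fdeg n k (d + m) := by
    intro m x hx
    have := hTsur (d + m) hx
    obtain ⟨u, hu, v, hv, huv⟩ := Submodule.mem_sup.mp this
    refine ⟨u, hu, ?_⟩
    rw [← huv]
    simpa using hv
  choose step hstep1 hstep2 using hstep
  let w : (m : ℕ) → {x : MvPowerSeries (Fin n) k // x ∈ T (d + m)} := fun m =>
    Nat.rec ⟨z₀, hz₀T⟩ (fun m p => ⟨step m p.1 p.2, hstep1 m p.1 p.2⟩) m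
  have hwsucc : ∀ m, (w (m + 1)).1 = step m (w m).1 (w m).2 := fun m => rfl
  have hwdif : ∀ m, (w m).1 - (w (m + 1)).1 ∈ Fdeg n k (d + m) := by
    intro m
    rw [hwsucc]
    exact hstep2 m (w m).1 (w m).2
  -- coefficient stabilization
  have hwstab : ∀ m1 m2, m1 ≤ m2 → ∀ γ : Fin n →₀ ℕ, deg γ ≤ d + m1 →
      MvPowerSeries.coeff γ (w m2).1 = MvPowerSeries.coeff γ (w m1).1 := by
    intro m1 m2 hm
    induction m2, hm using Nat.le_induction with
    | base => intro γ _; rfl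
    | succ m2 hm ih =>
      intro γ hγ
      have h1 := hwdif m2 γ (by omega)
      rw [map_sub, sub_eq_zero] at h1
      rw [← h1]
      exact ih γ hγ
  -- the limit
  set Z : MvPowerSeries (Fin n) k :=
    (fun γ => MvPowerSeries.coeff γ (w (deg γ)).1 : (Fin n →₀ ℕ) → k) with hZdef
  have hZcoeff : ∀ γ : Fin n →₀ ℕ, MvPowerSeries.coeff γ Z
      = MvPowerSeries.coeff γ (w (deg γ)).1 := fun γ => rfl
  have hZw : ∀ m (γ : Fin n →₀ ℕ), deg γ ≤ d + m →
      MvPowerSeries.coeff γ Z = MvPowerSeries.coeff γ (w m).1 := by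
    intro m γ hγ
    rw [hZcoeff]
    have h1 := hwstab (deg γ) (max m (deg γ)) (le_max_right _ _) γ (by omega)
    have h2 := hwstab m (max m (deg γ)) (le_max_left _ _) γ hγ
    rw [← h1, h2]
  have hZsub : ∀ m, Z - (w m).1 ∈ Fdeg n k (d + m) := by
    intro m γ hγ
    rw [map_sub, hZw m γ hγ, sub_self]
  -- Z is in the closure of both ideals
  have hZI : Z ∈ Cl I := by
    rw [mem_Cl_iff]
    intro m
    have h1 : (w m).1 ∈ Ik ⊔ Fdeg n k m :=
      (hTI (d + m)).trans (sup_le_sup_left (Fdeg_antitone (by omega)) _) (w m).2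
    have h2 : Z - (w m).1 ∈ Fdeg n k m := Fdeg_antitone (by omega) (hZsub m)
    have := Submodule.add_mem _ h1 (Submodule.mem_sup_right h2)
    simpa using this
  have hZJ : Z ∈ Cl J := by
    rw [mem_Cl_iff]
    intro m
    have h1 : (w m).1 ∈ Jk ⊔ Fdeg n k m :=
      (hTJ (d + m)).trans (sup_le_sup_left (Fdeg_antitone (by omega)) _) (w m).2
    have h2 : Z - (w m).1 ∈ Fdeg n k m := Fdeg_antitone (by omega) (hZsub m)
    have := Submodule.add_mem _ h1 (Submodule.mem_sup_right h2)
    simpa using this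
  -- contradiction
  have hφZ : φ Z = 0 := hIJ Z (Cl_le_self I hZI) (Cl_le_self J hZJ)
  have hZz₀ : Z - z₀ ∈ Fdeg n k d := by
    have := hZsub 0
    exact this
  have : φ (Z - z₀) = 0 := hd hZz₀
  rw [map_sub, hφZ, zero_sub, neg_eq_zero] at this
  exact hz₀φ this

end Chevalley

end MacaulayAux


namespace MacaulayAux

noncomputable section Glue

variable {n : ℕ} {k : Type} [Field k]

/-- The pairing of a polynomial with a power series. -/
def pairF (F : MvPolynomial (Fin n) k) : MvPowerSeries (Fin n) k →ₗ[k] k :=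
  ∑ γ ∈ F.support, (MvPolynomial.coeff γ F) • (MvPowerSeries.coeff γ)

lemma pairF_apply (F : MvPolynomial (Fin n) k) (g : MvPowerSeries (Fin n) k) :
    pairF F g = ∑ γ ∈ F.support, MvPolynomial.coeff γ F * MvPowerSeries.coeff γ g := by
  simp [pairF]

lemma pairF_apply_superset (F : MvPolynomial (Fin n) k) {S : Finset (Fin n →₀ ℕ)}
    (hS : F.support ⊆ S) (g : MvPowerSeries (Fin n) k) :
    pairF F g = ∑ γ ∈ S, MvPolynomial.coeff γ F * MvPowerSeries.coeff γ g := by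
  rw [pairF_apply]
  exact Finset.sum_subset hS fun γ _ hγ => by
    rw [MvPolynomial.notMem_support_iff.mp hγ, zero_mul]

lemma pairF_sub (F G : MvPolynomial (Fin n) k) (g : MvPowerSeries (Fin n) k) :
    pairF (F - G) g = pairF F g - pairF G g := by
  classical
  set S := F.support ∪ G.support ∪ (F - G).support with hS
  rw [pairF_apply_superset (F - G) (S := S) (by rw [hS]; exact Finset.subset_union_right),
    pairF_apply_superset F (S := S)
      (by rw [hS]; exact Finset.subset_union_left.trans Finset.subset_union_left),
    pairF_apply_superset G (S := S)
      (by rw [hS]; exact Finset.subset_union_right.trans Finset.subset_union_left),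
    ← Finset.sum_sub_distrib]
  refine Finset.sum_congr rfl fun γ _ => ?_
  rw [MvPolynomial.coeff_sub, sub_mul]

lemma Fdeg_le_ker_pairF (F : MvPolynomial (Fin n) k) :
    Fdeg n k F.totalDegree ≤ LinearMap.ker (pairF F) := by
  intro g hg
  rw [LinearMap.mem_ker, pairF_apply]
  refine Finset.sum_eq_zero fun γ hγ => ?_
  rw [hg γ (MvPolynomial.le_totalDegree hγ), mul_zero]

lemma mem_perp_iff_pairF {I : Ideal (MvPowerSeries (Fin n) k)} {F : MvPolynomial (Fin n) k} :
    F ∈ perp I ↔ ∀ g ∈ I, pairF F g = 0 := by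
  rw [mem_perp_iff]
  constructor
  · intro h g hg
    have h0 := h g hg
    have := coeff_contract g F (le_refl F.support) 0
    rw [h0, MvPolynomial.coeff_zero] at this
    have h2 : ∑ γ ∈ F.support, (if (0 : Fin n →₀ ℕ) ≤ γ then
        MvPowerSeries.coeff (γ - 0) g * MvPolynomial.coeff γ F else 0)
        = ∑ γ ∈ F.support, MvPolynomial.coeff γ F * MvPowerSeries.coeff γ g :=
      Finset.sum_congr rfl fun γ _ => by rw [if_pos (zero_le : (0 : Fin n →₀ ℕ) ≤ γ), tsub_zero, mul_comm]
    rw [pairF_apply, ← h2, ← this]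
  · intro h g hg
    apply MvPolynomial.ext
    intro β
    rw [MvPolynomial.coeff_zero, coeff_contract g F (le_refl F.support) β]
    have h1 := h (MvPowerSeries.monomial β 1 * g) (I.mul_mem_left _ hg)
    rw [pairF_apply] at h1
    refine Eq.trans ?_ h1
    refine Finset.sum_congr rfl fun γ _ => ?_
    rw [MvPowerSeries.coeff_monomial_mul]
    split_ifs with hc
    · ring
    · rw [mul_zero]

lemma exists_poly_rep (φ : MvPowerSeries (Fin n) k →ₗ[k] k) (e : ℕ)
    (hφ : Fdeg n k e ≤ LinearMap.ker φ) :
    ∃ G : MvPolynomial (Fin n) k, ∀ g, pairF G g = φ g := by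
  classical
  set G : MvPolynomial (Fin n) k :=
    ∑ γ ∈ Sd n e, MvPolynomial.monomial γ (φ (MvPowerSeries.monomial γ 1)) with hG
  have hsupp : G.support ⊆ Sd n e := by
    rw [hG]
    refine (MvPolynomial.support_sum).trans ?_
    intro γ hγ
    rw [Finset.mem_biUnion] at hγ
    obtain ⟨γ', hγ', hmem⟩ := hγ
    have := MvPolynomial.support_monomial_subset hmem
    rw [Finset.mem_singleton] at this
    rwa [this]
  have hcoeff : ∀ γ ∈ Sd n e, MvPolynomial.coeff γ G = φ (MvPowerSeries.monomial γ 1) := by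
    intro γ hγ
    rw [hG, MvPolynomial.coeff_sum]
    have h5 : ∀ γ' ∈ Sd n e, MvPolynomial.coeff γ
        (MvPolynomial.monomial γ' (φ (MvPowerSeries.monomial γ' 1)))
        = if γ' = γ then φ (MvPowerSeries.monomial γ' 1) else 0 := fun γ' _ =>
      MvPolynomial.coeff_monomial _ _ _
    rw [Finset.sum_congr rfl h5, Finset.sum_ite_eq' _ γ
      (fun γ' => φ (MvPowerSeries.monomial γ' 1)), if_pos hγ]
  refine ⟨G, fun g => ?_⟩
  have htail : φ (g - ∑ γ ∈ Sd n e, MvPowerSeries.monomial γ (MvPowerSeries.coeff γ g))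
      = 0 := hφ (sub_trunc_mem_Fdeg e g)
  rw [map_sub, sub_eq_zero] at htail
  rw [pairF_apply_superset G hsupp g, htail, map_sum]
  refine Finset.sum_congr rfl fun γ hγ => ?_
  rw [hcoeff γ hγ]
  have : MvPowerSeries.monomial γ (MvPowerSeries.coeff γ g)
      = (MvPowerSeries.coeff γ g) • MvPowerSeries.monomial γ 1 := by
    rw [← map_smul, smul_eq_mul, mul_one]
  rw [this, map_smul, smul_eq_mul, mul_comm]

end Glue
end MacaulayAux


/-- `(I ∩ J)^⊥ = I^⊥ + J^⊥` for any two ideals `I, J` of `R`. -/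
theorem perp_inf {n : ℕ} {k : Type} [Field k] (hn : 1 ≤ n)
    (I J : Ideal (MvPowerSeries (Fin n) k)) :
    perp (I ⊓ J) = perp I ⊔ perp J := by
  classical
  apply le_antisymm
  · -- hard direction
    intro F hF
    set φ := MacaulayAux.pairF F with hφdef
    have hd : MacaulayAux.Fdeg n k F.totalDegree ≤ LinearMap.ker φ :=
      MacaulayAux.Fdeg_le_ker_pairF F
    have hIJ : ∀ g, g ∈ I → g ∈ J → φ g = 0 := by
      intro g hgI hgJ
      exact MacaulayAux.mem_perp_iff_pairF.mp hF g (Submodule.mem_inf.mpr ⟨hgI, hgJ⟩)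
    obtain ⟨e, he⟩ := MacaulayAux.chevalley I J φ F.totalDegree hd hIJ
    obtain ⟨φ₁, φ₂, hsum, hA, hB⟩ := MacaulayAux.split_functional _ _ φ he
    have hFe1 : MacaulayAux.Fdeg n k e ≤ LinearMap.ker φ₁ := le_sup_right.trans hA
    obtain ⟨G, hG⟩ := MacaulayAux.exists_poly_rep φ₁ e hFe1
    have hGperp : G ∈ perp I := by
      rw [MacaulayAux.mem_perp_iff_pairF]
      intro g hg
      rw [hG]
      exact hA (Submodule.mem_sup_left hg)
    have hHperp : F - G ∈ perp J := by
      rw [MacaulayAux.mem_perp_iff_pairF]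
      intro g hg
      rw [MacaulayAux.pairF_sub, hG]
      have h2 : φ₂ g = 0 := hB (Submodule.mem_sup_left hg)
      have h4 : MacaulayAux.pairF F g = φ₁ g + φ₂ g := by
        rw [← hφdef, hsum]; rfl
      rw [h4, h2, add_zero, sub_self]
    have hFeq : F = G + (F - G) := by ring
    rw [hFeq]
    exact Submodule.add_mem_sup hGperp hHperp
  · -- easy direction
    refine sup_le ?_ ?_
    · intro F hF
      rw [mem_perp_iff] at hF ⊢
      exact fun g hg => hF g (Submodule.mem_inf.mp hg).1
    · intro F hF
      rw [mem_perp_iff] at hF ⊢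
      exact fun g hg => hF g (Submodule.mem_inf.mp hg).2
end
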